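/- arXiv:1807.03294 — 3 statements merged into one kernel-verified Lean document; each statement's English description precedes it below -/
import Mathlib

section
/- Fix s ≥ 1 and n ≥ 1. The uncrowding map Ψ, which sends a one-row tableau T ∈ SVT^n((s)) with boxes A_1, …, A_s (left to right) to the tableau of hook shape (s, 1^{excess(T)}) whose first row is (min A_1, …, min A_s) and whose first column below the corner lists, in increasing order, all remaining (non-minimal) entries of A_1, A_2, …, A_s, is a bijection from SVT^n((s)) onto the disjoint union over e ≥ 0 of SSYT^n((s, 1^e)); moreover Ψ preserves weights and commutes with all crystal operators e_i and f_i (1 ≤ i < n). -/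
open scoped Classical

noncomputable section

namespace SVTCrystal

/-- A filling assigns to each (row, column) position (0-indexed) a finite set of entries. -/
abbrev Filling : Type := ℕ → ℕ → Finset ℕ

/-- `lam` is a partition shape with at most `n` rows. -/
def IsPartitionShape (n : ℕ) (lam : ℕ → ℕ) : Prop :=
  (∀ r, lam (r + 1) ≤ lam r) ∧ (∀ r, n ≤ r → lam r = 0)

/-- Semistandard set-valued tableau of shape `lam` with entries in `{1,…,n}`. -/
structure IsSVT (n : ℕ) (lam : ℕ → ℕ) (t : Filling) : Prop where
  boxNonempty : ∀ r c, c < lam r → (t r c).Nonempty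
  emptyOutside : ∀ r c, ¬ c < lam r → t r c = ∅
  entryBounds : ∀ r c a, a ∈ t r c → 1 ≤ a ∧ a ≤ n
  rowWeak : ∀ r c a b, a ∈ t r c → b ∈ t r (c + 1) → a ≤ b
  colStrict : ∀ r c a b, a ∈ t r c → b ∈ t (r + 1) c → a < b

/-- Semistandard Young tableau: a set-valued tableau all of whose boxes are singletons. -/
def IsSSYT (n : ℕ) (lam : ℕ → ℕ) (t : Filling) : Prop :=
  IsSVT n lam t ∧ ∀ r c, c < lam r → (t r c).card = 1

/-- The weight: `wt n lam t j` is the number of boxes of `t` containing the entry `j`. -/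
def wt (n : ℕ) (lam : ℕ → ℕ) (t : Filling) (j : ℕ) : ℕ :=
  ((Finset.range n ×ˢ Finset.range (lam 0)).filter (fun p => j ∈ t p.1 p.2)).card

/-- The excess: total number of extra entries. -/
def excess (n : ℕ) (lam : ℕ → ℕ) (t : Filling) : ℕ :=
  ∑ p ∈ Finset.range n ×ˢ Finset.range (lam 0), ((t p.1 p.2).card - 1)

/-- Column `c` contains the entry `a`. -/
def colHas (n : ℕ) (t : Filling) (a c : ℕ) : Prop := ∃ r, r < n ∧ a ∈ t r c

/-- The sign of column `c` for the `i`-signature rule: `+` (true) if the column contains `i`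
but not `i+1`, `-` (false) if it contains `i+1` but not `i`. -/
def colSign (n : ℕ) (t : Filling) (i c : ℕ) : Option Bool :=
  if colHas n t i c ∧ ¬ colHas n t (i + 1) c then some true
  else if colHas n t (i + 1) c ∧ ¬ colHas n t i c then some false
  else none

/-- The number of `-` (false) signs left uncanceled after scanning the word left-to-right,
iteratively canceling `-+` pairs. -/
def mctr (w : List Bool) : ℕ := w.foldl (fun cnt b => if b then cnt - 1 else cnt + 1) 0

/-- The number of `+` (true) signs left uncanceled, scanning right-to-left. -/
def pctr (w : List Bool) : ℕ := w.foldr (fun b cnt => if b then cnt + 1 else cnt - 1) 0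

/-- The word of column signs of the columns before column `c`. -/
def colWordBefore (n : ℕ) (t : Filling) (i c : ℕ) : List Bool :=
  (List.range c).filterMap (colSign n t i)

/-- The word of column signs of the columns after column `c` (among columns `< ncols`). -/
def colWordAfter (n ncols : ℕ) (t : Filling) (i c : ℕ) : List Bool :=
  ((List.range ncols).drop (c + 1)).filterMap (colSign n t i)

/-- Column `c` carries an uncanceled `+` for the `i`-signature rule. -/
def PlusCol (n ncols : ℕ) (t : Filling) (i c : ℕ) : Prop :=
  c < ncols ∧ colSign n t i c = some true ∧ mctr (colWordBefore n t i c) = 0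

/-- Column `c` carries an uncanceled `-` for the `i`-signature rule. -/
def MinusCol (n ncols : ℕ) (t : Filling) (i c : ℕ) : Prop :=
  c < ncols ∧ colSign n t i c = some false ∧ pctr (colWordAfter n ncols t i c) = 0

/-- Column `c` is the rightmost uncanceled `+`. -/
def fBoxCol (n ncols : ℕ) (t : Filling) (i c : ℕ) : Prop :=
  PlusCol n ncols t i c ∧ ∀ c', PlusCol n ncols t i c' → c' ≤ c

/-- Column `c` is the leftmost uncanceled `-`. -/
def eBoxCol (n ncols : ℕ) (t : Filling) (i c : ℕ) : Prop :=
  MinusCol n ncols t i c ∧ ∀ c', MinusCol n ncols t i c' → c ≤ c'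

/-- Replace the content of the box in row `r`, column `c` by `A`. -/
def updateBox (t : Filling) (r c : ℕ) (A : Finset ℕ) : Filling :=
  fun r' c' => if r' = r ∧ c' = c then A else t r' c'

/-- The set-valued crystal operator `f_i` (signature rule). -/
def fRaw (n : ℕ) (lam : ℕ → ℕ) (i : ℕ) (t : Filling) : Option Filling :=
  if h : ∃ c, fBoxCol n (lam 0) t i c then
    let c := Classical.choose h
    if hr : ∃ r, r < n ∧ i ∈ t r c then
      let r := Classical.choose hr
      if i ∈ t r (c + 1) then
        some (updateBox (updateBox t r (c + 1) ((t r (c + 1)).erase i)) r c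
          (insert (i + 1) (t r c)))
      else some (updateBox t r c (insert (i + 1) ((t r c).erase i)))
    else none
  else none

/-- The set-valued crystal operator `e_i` (signature rule). -/
def eRaw (n : ℕ) (lam : ℕ → ℕ) (i : ℕ) (t : Filling) : Option Filling :=
  if h : ∃ c, eBoxCol n (lam 0) t i c then
    let c := Classical.choose h
    if hr : ∃ r, r < n ∧ (i + 1) ∈ t r c then
      let r := Classical.choose hr
      if 0 < c ∧ (i + 1) ∈ t r (c - 1) then
        some (updateBox (updateBox t r (c - 1) ((t r (c - 1)).erase (i + 1))) r c
          (insert i (t r c)))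
      else some (updateBox t r c (insert i ((t r c).erase (i + 1))))
    else none
  else none

/-- Iterate a partially-defined operator. -/
def iterOpt (g : Filling → Option Filling) : ℕ → Filling → Option Filling
  | 0, t => some t
  | m + 1, t => (iterOpt g m t).bind g

/-- Highest weight (Yamanouchi) elements. -/
def IsYamanouchi (n : ℕ) (lam : ℕ → ℕ) (t : Filling) : Prop :=
  ∀ i, 1 ≤ i → i < n → eRaw n lam i t = none

/-- Closure of `t0` under the crystal operators `e_i`, `f_i` for `1 ≤ i < n`. -/
inductive Reach (n : ℕ) (lam : ℕ → ℕ) (t0 : Filling) : Filling → Prop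
  | base : Reach n lam t0 t0
  | stepF : ∀ {t t' : Filling} (i : ℕ), 1 ≤ i → i < n → Reach n lam t0 t →
      fRaw n lam i t = some t' → Reach n lam t0 t'
  | stepE : ∀ {t t' : Filling} (i : ℕ), 1 ≤ i → i < n → Reach n lam t0 t →
      eRaw n lam i t = some t' → Reach n lam t0 t'

/-- The one-row partition `(s)`. -/
def rowShape (s : ℕ) : ℕ → ℕ := fun r => if r = 0 then s else 0

/-- The one-column partition `(1^k)`. -/
def colShape (k : ℕ) : ℕ → ℕ := fun r => if r < k then 1 else 0

/-- The hook partition `(s, 1^e)`. -/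
def hookShape (s e : ℕ) : ℕ → ℕ := fun r => if r = 0 then s else if r ≤ e then 1 else 0

/-! ### K-theory crystal operators (for single rows and single columns) -/

/-- Some box of the tableau contains the entry `a`. -/
def containsEntry (n : ℕ) (lam : ℕ → ℕ) (t : Filling) (a : ℕ) : Prop :=
  ∃ r c, r < n ∧ c < lam r ∧ a ∈ t r c

/-- `p` is the rightmost box of `t` containing `i`. -/
def KBoxF (n : ℕ) (lam : ℕ → ℕ) (t : Filling) (i : ℕ) (p : ℕ × ℕ) : Prop :=
  p.1 < n ∧ p.2 < lam p.1 ∧ i ∈ t p.1 p.2 ∧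
    ∀ q : ℕ × ℕ, q.1 < n → q.2 < lam q.1 → i ∈ t q.1 q.2 → q.2 ≤ p.2

/-- The K-crystal operator `f_i^K`: if `i` occurs in `t` and `i+1` does not, add `i+1` to
the rightmost box containing `i`; otherwise `0`. -/
def fK (n : ℕ) (lam : ℕ → ℕ) (i : ℕ) (t : Filling) : Option Filling :=
  if h : (∃ p : ℕ × ℕ, KBoxF n lam t i p) ∧ ¬ containsEntry n lam t (i + 1) then
    let p := Classical.choose h.1
    some (updateBox t p.1 p.2 (insert (i + 1) (t p.1 p.2)))
  else none

/-- The K-crystal operator `e_i^K`: delete `i+1` from the box containing both `i` and `i+1`,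
if such a box exists; otherwise `0`. -/
def eK (n : ℕ) (lam : ℕ → ℕ) (i : ℕ) (t : Filling) : Option Filling :=
  if h : ∃ p : ℕ × ℕ, p.1 < n ∧ p.2 < lam p.1 ∧ i ∈ t p.1 p.2 ∧ (i + 1) ∈ t p.1 p.2 then
    let p := Classical.choose h
    some (updateBox t p.1 p.2 ((t p.1 p.2).erase (i + 1)))
  else none

/-- `t'` is the result of applying `g` to `t` as many times as possible. -/
def MaxApply (g : Filling → Option Filling) (t t' : Filling) : Prop :=
  (∃ m, iterOpt g m t = some t') ∧ g t' = none

/-- One Demazure step: apply `e_i` as many times as possible, then `e_i^K` as many times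
as possible (here `eKop i` is the `i`-th K-operator). -/
def DemStep (n : ℕ) (lam : ℕ → ℕ) (eKop : ℕ → Filling → Option Filling) (i : ℕ)
    (t t' : Filling) : Prop :=
  ∃ t1, MaxApply (eRaw n lam i) t t1 ∧ MaxApply (eKop i) t1 t'

/-- `DemReach n lam eKop [i₁,…,iℓ] t u` holds when
`u = (e_{iℓ}^K)^max e_{iℓ}^max ⋯ (e_{i₁}^K)^max e_{i₁}^max t`. -/
def DemReach (n : ℕ) (lam : ℕ → ℕ) (eKop : ℕ → Filling → Option Filling) :
    List ℕ → Filling → Filling → Prop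
  | [], t, u => t = u
  | i :: rest, t, u => ∃ t2, DemStep n lam eKop i t t2 ∧ DemReach n lam eKop rest t2 u

/-- The minimal highest weight tableau `u_λ`, whose row `r` boxes are all `{r+1}`. -/
def uTab (lam : ℕ → ℕ) : Filling := fun r c => if c < lam r then {r + 1} else ∅

/-- The K-Demazure crystal associated with a word `[i₁,…,iℓ]`. -/
def KDem (n : ℕ) (lam : ℕ → ℕ) (eKop : ℕ → Filling → Option Filling) (word : List ℕ) :
    Set Filling :=
  {t | IsSVT n lam t ∧ DemReach n lam eKop word t (uTab lam)}

/-! ### Permutations and reduced words -/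

/-- The permutation `s_{i₁} ⋯ s_{iℓ}` of a word `[i₁,…,iℓ]`, where `s_i` swaps `i`, `i+1`. -/
def wordPerm (word : List ℕ) : Equiv.Perm ℕ :=
  (word.map fun i => Equiv.swap i (i + 1)).prod

/-- `word` is a reduced word for `w` in the Coxeter generators `s_1, …, s_{n-1}`. -/
def IsReducedWord (n : ℕ) (w : Equiv.Perm ℕ) (word : List ℕ) : Prop :=
  (∀ i ∈ word, 1 ≤ i ∧ i < n) ∧ wordPerm word = w ∧
    ∀ word' : List ℕ, (∀ i ∈ word', 1 ≤ i ∧ i < n) → wordPerm word' = w →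
      word.length ≤ word'.length

/-- The Coxeter length of a permutation of `{1,…,n}`. -/
def permLength (n : ℕ) (σ : Equiv.Perm ℕ) : ℕ :=
  sInf {l | ∃ word : List ℕ, (∀ i ∈ word, 1 ≤ i ∧ i < n) ∧ wordPerm word = σ ∧
    word.length = l}

/-- The parabolic subgroup generated by `s_2, …, s_{n-1}`. -/
def parabolic (n : ℕ) : Subgroup (Equiv.Perm ℕ) :=
  Subgroup.closure {σ | ∃ i, 2 ≤ i ∧ i < n ∧ σ = Equiv.swap i (i + 1)}

/-! ### Polynomials -/

/-- Polynomials in `x₁, x₂, …` over `ℤ[β]`; the variable `β` is `Polynomial.X`. -/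
abbrev KPoly : Type := MvPolynomial ℕ (Polynomial ℤ)

/-- The scalar `β`. -/
def betaP : KPoly := MvPolynomial.C Polynomial.X

/-- The monomial `x^{wt(T)} = x₁^{wt₁} ⋯ xₙ^{wtₙ}`. -/
def xwt (n : ℕ) (lam : ℕ → ℕ) (t : Filling) : KPoly :=
  ∏ j ∈ Finset.Icc 1 n, (MvPolynomial.X j : KPoly) ^ wt n lam t j

/-- The β-character `∑_{T ∈ S} β^{excess T} x^{wt T}` of a set of tableaux. -/
def charSet (n : ℕ) (lam : ℕ → ℕ) (S : Set Filling) : KPoly :=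
  ∑ᶠ t ∈ S, betaP ^ excess n lam t * xwt n lam t

/-- The symmetric Grothendieck polynomial `𝔊_λ(x₁,…,xₙ; β)`. -/
def Groth (n : ℕ) (lam : ℕ → ℕ) : KPoly :=
  charSet n lam {t | IsSVT n lam t}

/-- The Schur polynomial `s_μ(x₁,…,xₙ)`. -/
def SchurP (n : ℕ) (mu : ℕ → ℕ) : KPoly :=
  ∑ᶠ t ∈ {t : Filling | IsSSYT n mu t}, xwt n mu t

/-- The numerator defining the Demazure–Lascoux operator `ϖ_i`. -/
def DLnum (i : ℕ) (f : KPoly) : KPoly :=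
  (MvPolynomial.X i + betaP * MvPolynomial.X i * MvPolynomial.X (i + 1)) * f -
    (MvPolynomial.X (i + 1) + betaP * MvPolynomial.X i * MvPolynomial.X (i + 1)) *
      (MvPolynomial.rename (Equiv.swap i (i + 1)) f)

/-- `DL` implements the Demazure–Lascoux operators `ϖ_i` for `1 ≤ i < n`:
`(x_i - x_{i+1}) · ϖ_i f` equals the defining numerator. -/
def IsDLOp (n : ℕ) (DL : ℕ → KPoly → KPoly) : Prop :=
  ∀ i, 1 ≤ i → i < n → ∀ f : KPoly,
    (MvPolynomial.X i - MvPolynomial.X (i + 1)) * DL i f = DLnum i f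

/-- `applyDL DL [i₁,…,iℓ] f = ϖ_{i₁} ϖ_{i₂} ⋯ ϖ_{iℓ} f`. -/
def applyDL (DL : ℕ → KPoly → KPoly) : List ℕ → KPoly → KPoly
  | [], f => f
  | i :: rest, f => DL i (applyDL DL rest f)

/-- The minimum of a finite set of naturals (`0` for the empty set). -/
def minE (A : Finset ℕ) : ℕ := sInf (A : Set ℕ)

/-- The non-minimal entries of the boxes of a one-row tableau, in increasing order. -/
def uncrowdRest (s : ℕ) (t : Filling) : List ℕ :=
  Finset.sort ((Finset.range s).biUnion fun c => (t 0 c).erase (minE (t 0 c))) (· ≤ ·)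

/-- The uncrowding map `Ψ` on one-row set-valued tableaux: the first row records the minima
of the boxes, and the first column below the corner lists the remaining entries in
increasing order. -/
def Psi (s : ℕ) (t : Filling) : Filling := fun r c =>
  if r = 0 ∧ c < s then {minE (t 0 c)}
  else if c = 0 ∧ 1 ≤ r ∧ r ≤ (uncrowdRest s t).length then {(uncrowdRest s t).getD (r - 1) 0}
  else ∅

/-!
A one-row set-valued tableau is determined by the minima `m c` of its boxes and the set `E` of its
non-minimal entries, an entry `x ∈ E` sitting in the last box `c` with `m c < x` (`crowd`). `Ψ`
records exactly this data, with `E` listed increasingly down the leg; this gives bijectivity and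
weight preservation.

For the crystal operators, the `i`-signature of a row reads `+⋯+−⋯−`, so nothing cancels, whereas
on the hook it reads `σ₀ +⋯+ −⋯−`: `σ₀` is the sign of the first column `{m 0} ∪ E`, and any other
column `c` carries `+` or `−` according as `m c = i` or `m c = i + 1`. On the row, `f_i` (resp.
`e_i`) either moves `i` (resp. `i + 1`) between two adjacent boxes or changes the minimum of a box,
and then only one minimum changes and `E` does not; or it changes a non-minimal entry, which changes
one entry of the leg. Comparing the two signatures in each case shows that the operator on the hook
changes exactly that first-row entry, resp. that leg entry.
-/

lemma minE_mem {A : Finset ℕ} (h : A.Nonempty) : minE A ∈ A := by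
  obtain ⟨x, hx⟩ := h
  exact Nat.sInf_mem (s := (↑A : Set ℕ)) ⟨x, hx⟩

lemma minE_le {A : Finset ℕ} {x : ℕ} (h : x ∈ A) : minE A ≤ x := Nat.sInf_le h

lemma minE_eq {A : Finset ℕ} {x : ℕ} (hx : x ∈ A) (h : ∀ y ∈ A, x ≤ y) : minE A = x :=
  le_antisymm (minE_le hx) (h _ (minE_mem ⟨x, hx⟩))

lemma minE_singleton (a : ℕ) : minE {a} = a :=
  minE_eq (Finset.mem_singleton_self a) (fun _ hy => (Finset.mem_singleton.mp hy).ge)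

lemma minE_insert_erase_minE {A : Finset ℕ} {a : ℕ}
    (hlt : ∀ y ∈ A, y ≠ minE A → a < y) : minE (insert a (A.erase (minE A))) = a :=
  minE_eq (Finset.mem_insert_self _ _) fun y hy => by
    rcases Finset.mem_insert.mp hy with rfl | hy
    · exact le_rfl
    · exact (hlt y (Finset.mem_erase.mp hy).2 (Finset.mem_erase.mp hy).1).le

lemma erase_minE_insert_erase_minE {A : Finset ℕ} {a : ℕ} (ha : a ∉ A)
    (hlt : ∀ y ∈ A, y ≠ minE A → a < y) :
    (insert a (A.erase (minE A))).erase (minE (insert a (A.erase (minE A)))) =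
      A.erase (minE A) := by
  rw [minE_insert_erase_minE hlt, Finset.erase_insert fun h => ha (Finset.mem_of_mem_erase h)]

lemma minE_insert_erase_of_lt {A : Finset ℕ} {x y : ℕ} (hA : A.Nonempty) (hx : minE A < x)
    (hy : minE A < y) : minE (insert y (A.erase x)) = minE A :=
  minE_eq (Finset.mem_insert_of_mem (Finset.mem_erase.mpr ⟨hx.ne, minE_mem hA⟩)) fun z hz => by
    rcases Finset.mem_insert.mp hz with rfl | hz
    · exact hy.le
    · exact minE_le (Finset.mem_erase.mp hz).2

lemma mctr_of_no_false {w : List Bool} (h : ∀ b ∈ w, b = true) : mctr w = 0 := by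
  suffices ∀ k, w.foldl (fun cnt b => if b then cnt - 1 else cnt + 1) k = k - w.length by
    simpa [mctr] using this 0
  induction w with
  | nil => simp
  | cons b v ih =>
    intro k
    obtain rfl : b = true := h b (by simp)
    simp [ih fun b hb => h b (by simp [hb]), Nat.sub_sub, Nat.add_comm]

lemma mctr_filterMap_range {f : ℕ → Option Bool} {c : ℕ}
    (h : ∀ j, 0 < j → j ≤ c → f j ≠ some false) :
    mctr ((List.range (c + 1)).filterMap f) =
      if f 0 = some false ∧ ∀ j, 0 < j → j ≤ c → f j ≠ some true then 1 else 0 := by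
  induction c with
  | zero => rcases hf : f 0 with _ | _ | _ <;> simp [mctr, hf]
  | succ c ih =>
    rw [List.range_succ, List.filterMap_append, mctr, List.foldl_append, ← mctr,
      ih fun j hj hjc => h j hj (by omega)]
    rcases hf : f (c + 1) with _ | _ | _
    · have : (∀ j, 0 < j → j ≤ c + 1 → f j ≠ some true) ↔
          ∀ j, 0 < j → j ≤ c → f j ≠ some true :=
        ⟨fun H j hj hjc => H j hj (by omega), fun H j hj hjc =>
          (Nat.le_succ_iff.mp hjc).elim (H j hj) (by rintro rfl; simp [hf])⟩
      simp [hf, this]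
    · exact absurd hf (h _ (by omega) (by omega))
    · have : ¬ ∀ j, 0 < j → j ≤ c + 1 → f j ≠ some true :=
        fun H => H _ (by omega) le_rfl hf
      simp only [List.filterMap_cons, hf, List.filterMap_nil, List.foldl_cons, List.foldl_nil]
      split_ifs <;> simp_all

lemma pctr_of_no_true {w : List Bool} (h : ∀ b ∈ w, b = false) : pctr w = 0 := by
  induction w with
  | nil => rfl
  | cons b v ih =>
    obtain rfl : b = false := h b (by simp)
    exact (congrArg (· - 1) (ih fun b hb => h b (by simp [hb]))).trans rfl

lemma drop_range_eq_range' (c ncols : ℕ) :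
    (List.range ncols).drop (c + 1) = List.range' (c + 1) (ncols - (c + 1)) := by
  rw [List.range_eq_range', List.drop_range']
  simp

lemma pctr_filterMap_drop_range_eq_zero {f : ℕ → Option Bool} {ncols c : ℕ}
    (h : ∀ j, c < j → j < ncols → f j ≠ some true) :
    pctr (((List.range ncols).drop (c + 1)).filterMap f) = 0 := by
  apply pctr_of_no_true
  intro b hb
  obtain ⟨j, hj, hfj⟩ := List.mem_filterMap.mp hb
  rw [drop_range_eq_range', List.mem_range'_1] at hj
  cases b
  · rfl
  · exact absurd hfj (h _ (by omega) (by omega))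

lemma pctr_filterMap_drop_range_ne_zero {f : ℕ → Option Bool} {ncols c k : ℕ} (hck : c < k)
    (hk : k < ncols) (hnone : ∀ j, c < j → j < k → f j = none) (hks : f k = some true) :
    pctr (((List.range ncols).drop (c + 1)).filterMap f) ≠ 0 := by
  obtain ⟨a, rfl⟩ : ∃ a, k = c + 1 + a := ⟨k - (c + 1), by omega⟩
  have hsplit : List.range' (c + 1) (ncols - (c + 1)) =
      List.range' (c + 1) a ++
        (c + 1 + a) :: List.range' (c + 1 + a + 1) (ncols - (c + 1 + a + 1)) := by
    rw [← List.range'_succ, List.range'_append_1]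
    congr 1
    omega
  have hpre : (List.range' (c + 1) a).filterMap f = [] :=
    List.filterMap_eq_nil_iff.mpr fun j hj => by
      rw [List.mem_range'_1] at hj
      exact hnone j (by omega) (by omega)
  rw [drop_range_eq_range', hsplit, List.filterMap_append, hpre, List.filterMap_cons, hks]
  exact Nat.succ_ne_zero _

section Operators

variable {n : ℕ} {lam : ℕ → ℕ} {u : Filling} {i : ℕ}

@[simp]
lemma updateBox_same (t : Filling) (r c : ℕ) (A : Finset ℕ) : updateBox t r c A r c = A := by
  simp [updateBox]

lemma updateBox_of_ne (t : Filling) (r c : ℕ) (A : Finset ℕ) {r' c' : ℕ}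
    (h : ¬ (r' = r ∧ c' = c)) : updateBox t r c A r' c' = t r' c' := by
  simp only [updateBox, if_neg h]

lemma updateBox_self (t : Filling) (r c : ℕ) : updateBox t r c (t r c) = t := by
  funext r' c'
  by_cases h : r' = r ∧ c' = c
  · obtain ⟨rfl, rfl⟩ := h
    exact updateBox_same _ _ _ _
  · exact updateBox_of_ne _ _ _ _ h

lemma updateBox_comm (t : Filling) {r c c' : ℕ} (h : c ≠ c') (A B : Finset ℕ) :
    updateBox (updateBox t r c A) r c' B = updateBox (updateBox t r c' B) r c A := by
  funext r' c''
  simp only [updateBox]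
  split_ifs <;> simp_all

lemma colSign_eq_some_true_iff {c : ℕ} :
    colSign n u i c = some true ↔ colHas n u i c ∧ ¬ colHas n u (i + 1) c := by
  unfold colSign
  split_ifs <;> simp_all

lemma colSign_eq_some_false_iff {c : ℕ} :
    colSign n u i c = some false ↔ colHas n u (i + 1) c ∧ ¬ colHas n u i c := by
  unfold colSign
  split_ifs <;> simp_all

lemma colSign_eq_none {c : ℕ} (h₁ : ¬ colHas n u i c) (h₂ : ¬ colHas n u (i + 1) c) :
    colSign n u i c = none := by
  unfold colSign
  rw [if_neg (by tauto), if_neg (by tauto)]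

lemma fBoxCol_unique {ncols c c' : ℕ} (h : fBoxCol n ncols u i c)
    (h' : fBoxCol n ncols u i c') : c = c' :=
  le_antisymm (h'.2 _ h.1) (h.2 _ h'.1)

lemma eBoxCol_unique {ncols c c' : ℕ} (h : eBoxCol n ncols u i c)
    (h' : eBoxCol n ncols u i c') : c = c' :=
  le_antisymm (h.2 _ h'.1) (h'.2 _ h.1)

lemma exists_fBoxCol {ncols : ℕ} (h : ∃ c, PlusCol n ncols u i c) :
    ∃ c, fBoxCol n ncols u i c := by
  obtain ⟨c, hc⟩ := h
  exact ⟨Nat.findGreatest (PlusCol n ncols u i) ncols, Nat.findGreatest_spec hc.1.le hc,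
    fun c' hc' => Nat.le_findGreatest hc'.1.le hc'⟩

lemma exists_eBoxCol {ncols : ℕ} (h : ∃ c, MinusCol n ncols u i c) :
    ∃ c, eBoxCol n ncols u i c :=
  ⟨Nat.find h, Nat.find_spec h, fun _ hc' => Nat.find_min' h hc'⟩

lemma PlusCol.colHas {ncols c : ℕ} (h : PlusCol n ncols u i c) : colHas n u i c :=
  (colSign_eq_some_true_iff.mp h.2.1).1

lemma MinusCol.colHas {ncols c : ℕ} (h : MinusCol n ncols u i c) : colHas n u (i + 1) c :=
  (colSign_eq_some_false_iff.mp h.2.1).1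

lemma fRaw_eq_none_iff : fRaw n lam i u = none ↔ ∀ c, ¬ PlusCol n (lam 0) u i c := by
  unfold fRaw
  by_cases h : ∃ c, fBoxCol n (lam 0) u i c
  · have hr : ∃ r, r < n ∧ i ∈ u r (Classical.choose h) := (Classical.choose_spec h).1.colHas
    simp only [dif_pos h, dif_pos hr]
    refine ⟨fun hcon => by split at hcon <;> simp_all, fun hall => ?_⟩
    exact absurd (Classical.choose_spec h).1 (hall _)
  · simp only [dif_neg h, true_iff]
    exact fun c hc => h (exists_fBoxCol ⟨c, hc⟩)

lemma eRaw_eq_none_iff : eRaw n lam i u = none ↔ ∀ c, ¬ MinusCol n (lam 0) u i c := by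
  unfold eRaw
  by_cases h : ∃ c, eBoxCol n (lam 0) u i c
  · have hr : ∃ r, r < n ∧ (i + 1) ∈ u r (Classical.choose h) :=
      (Classical.choose_spec h).1.colHas
    simp only [dif_pos h, dif_pos hr]
    refine ⟨fun hcon => by split at hcon <;> simp_all, fun hall => ?_⟩
    exact absurd (Classical.choose_spec h).1 (hall _)
  · simp only [dif_neg h, true_iff]
    exact fun c hc => h (exists_eBoxCol ⟨c, hc⟩)

lemma fRaw_eq_some {c r : ℕ} (hc : fBoxCol n (lam 0) u i c) (hr : r < n) (hmem : i ∈ u r c)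
    (huniq : ∀ r', r' < n → i ∈ u r' c → r' = r) :
    fRaw n lam i u = some (if i ∈ u r (c + 1) then
      updateBox (updateBox u r (c + 1) ((u r (c + 1)).erase i)) r c (insert (i + 1) (u r c))
      else updateBox u r c (insert (i + 1) ((u r c).erase i))) := by
  have hex : ∃ c, fBoxCol n (lam 0) u i c := ⟨c, hc⟩
  have hrex : ∃ r, r < n ∧ i ∈ u r c := ⟨r, hr, hmem⟩
  obtain rfl : Classical.choose hex = c := fBoxCol_unique (Classical.choose_spec hex) hc
  obtain rfl : Classical.choose hrex = r := huniq _ (Classical.choose_spec hrex).1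
    (Classical.choose_spec hrex).2
  unfold fRaw
  rw [dif_pos hex]
  dsimp only
  rw [dif_pos hrex]
  split_ifs <;> rfl

lemma eRaw_eq_some {c r : ℕ} (hc : eBoxCol n (lam 0) u i c) (hr : r < n)
    (hmem : (i + 1) ∈ u r c) (huniq : ∀ r', r' < n → (i + 1) ∈ u r' c → r' = r) :
    eRaw n lam i u = some (if 0 < c ∧ (i + 1) ∈ u r (c - 1) then
      updateBox (updateBox u r (c - 1) ((u r (c - 1)).erase (i + 1))) r c (insert i (u r c))
      else updateBox u r c (insert i ((u r c).erase (i + 1)))) := by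
  have hex : ∃ c, eBoxCol n (lam 0) u i c := ⟨c, hc⟩
  have hrex : ∃ r, r < n ∧ (i + 1) ∈ u r c := ⟨r, hr, hmem⟩
  obtain rfl : Classical.choose hex = c := eBoxCol_unique (Classical.choose_spec hex) hc
  obtain rfl : Classical.choose hrex = r := huniq _ (Classical.choose_spec hrex).1
    (Classical.choose_spec hrex).2
  unfold eRaw
  rw [dif_pos hex]
  dsimp only
  rw [dif_pos hrex]
  split_ifs <;> rfl

end Operators

lemma lt_rowShape_iff {s r c : ℕ} : c < rowShape s r ↔ r = 0 ∧ c < s := by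
  unfold rowShape
  split_ifs <;> omega

lemma lt_hookShape_iff {s e r c : ℕ} :
    c < hookShape s e r ↔ (r = 0 ∧ c < s) ∨ (r ≠ 0 ∧ r ≤ e ∧ c = 0) := by
  unfold hookShape
  split_ifs <;> omega

lemma IsSVT.le_of_col_lt {n : ℕ} {lam : ℕ → ℕ} {u : Filling} (hu : IsSVT n lam u)
    {r c c' a b : ℕ} (hcc : c < c') (hc' : c' < lam r) (ha : a ∈ u r c) (hb : b ∈ u r c') :
    a ≤ b := by
  induction c' generalizing b with
  | zero => omega
  | succ d ih =>
    rcases Nat.lt_or_ge c d with h | h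
    · obtain ⟨y, hy⟩ := hu.boxNonempty r d (by omega)
      exact (ih h (by omega) hy).trans (hu.rowWeak r d y b hy hb)
    · obtain rfl : c = d := by omega
      exact hu.rowWeak r c a b ha hb

section OneRow

variable {n s : ℕ} {t : Filling}

lemma box_eq_empty_of_ne_zero (ht : IsSVT n (rowShape s) t) {r c : ℕ} (hr : r ≠ 0) :
    t r c = ∅ :=
  ht.emptyOutside r c (by simp [lt_rowShape_iff, hr])

lemma box_eq_empty_of_le (ht : IsSVT n (rowShape s) t) {c : ℕ} (hc : s ≤ c) : t 0 c = ∅ :=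
  ht.emptyOutside 0 c (by simp [lt_rowShape_iff]; omega)

lemma box_nonempty (ht : IsSVT n (rowShape s) t) {c : ℕ} (hc : c < s) : (t 0 c).Nonempty :=
  ht.boxNonempty 0 c (lt_rowShape_iff.mpr ⟨rfl, hc⟩)

lemma lt_of_mem_box (ht : IsSVT n (rowShape s) t) {a c : ℕ} (h : a ∈ t 0 c) : c < s := by
  by_contra hc
  simp [box_eq_empty_of_le ht (not_lt.mp hc)] at h

lemma le_of_mem_box_of_lt (ht : IsSVT n (rowShape s) t) {c c' a b : ℕ} (hcc : c < c')
    (ha : a ∈ t 0 c) (hb : b ∈ t 0 c') : a ≤ b :=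
  ht.le_of_col_lt hcc (lt_rowShape_iff.mpr ⟨rfl, lt_of_mem_box ht hb⟩) ha hb

lemma minE_mem_box (ht : IsSVT n (rowShape s) t) {c : ℕ} (hc : c < s) :
    minE (t 0 c) ∈ t 0 c :=
  minE_mem (box_nonempty ht hc)

lemma minE_box_mono (ht : IsSVT n (rowShape s) t) {c c' : ℕ} (hcc : c ≤ c') (hc' : c' < s) :
    minE (t 0 c) ≤ minE (t 0 c') := by
  rcases hcc.eq_or_lt with rfl | h
  · exact le_rfl
  · exact le_of_mem_box_of_lt ht h (minE_mem_box ht (h.trans hc')) (minE_mem_box ht hc')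

lemma mem_box_of_le_of_le (ht : IsSVT n (rowShape s) t) {a c c' c'' : ℕ} (h : a ∈ t 0 c)
    (h'' : a ∈ t 0 c'') (hc : c ≤ c') (hc' : c' ≤ c'') : a ∈ t 0 c' := by
  rcases hc.eq_or_lt with rfl | hlt
  · exact h
  rcases hc'.eq_or_lt with rfl | hlt'
  · exact h''
  obtain ⟨y, hy⟩ := box_nonempty ht (hlt'.trans (lt_of_mem_box ht h''))
  obtain rfl : y = a :=
    le_antisymm (le_of_mem_box_of_lt ht hlt' hy h'') (le_of_mem_box_of_lt ht hlt h hy)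
  exact hy

lemma minE_eq_of_mem_of_lt (ht : IsSVT n (rowShape s) t) {a c c' : ℕ} (hcc : c < c')
    (ha : a ∈ t 0 c) (ha' : a ∈ t 0 c') : minE (t 0 c') = a :=
  minE_eq ha' fun _ hy => le_of_mem_box_of_lt ht hcc ha hy

lemma eq_of_mem_of_ne_minE (ht : IsSVT n (rowShape s) t) {a c c' : ℕ} (h : a ∈ t 0 c)
    (hne : a ≠ minE (t 0 c)) (h' : a ∈ t 0 c') (hne' : a ≠ minE (t 0 c')) : c = c' := by
  by_contra hcc
  rcases Nat.lt_or_gt_of_ne hcc with hlt | hlt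
  · exact hne' (minE_eq_of_mem_of_lt ht hlt h h').symm
  · exact hne (minE_eq_of_mem_of_lt ht hlt h' h).symm

lemma colHas_row_iff (ht : IsSVT n (rowShape s) t) {a c : ℕ} :
    colHas n t a c ↔ a ∈ t 0 c := by
  constructor
  · rintro ⟨r, -, hm⟩
    rcases eq_or_ne r 0 with rfl | hr
    · exact hm
    · simp [box_eq_empty_of_ne_zero ht hr] at hm
  · intro h
    exact ⟨0, by have := ht.entryBounds 0 c a h; omega, h⟩

lemma plusCol_row_iff (ht : IsSVT n (rowShape s) t) {i c : ℕ} :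
    PlusCol n s t i c ↔ i ∈ t 0 c ∧ (i + 1) ∉ t 0 c := by
  simp only [PlusCol, colSign_eq_some_true_iff, colHas_row_iff ht]
  refine ⟨fun h => h.2.1, fun h => ⟨lt_of_mem_box ht h.1, h, mctr_of_no_false ?_⟩⟩
  intro b hb
  obtain ⟨j, hj, hsign⟩ := List.mem_filterMap.mp hb
  cases b
  · have := le_of_mem_box_of_lt ht (List.mem_range.mp hj)
      ((colHas_row_iff ht).mp (colSign_eq_some_false_iff.mp hsign).1) h.1
    omega
  · rfl

lemma minusCol_row_iff (ht : IsSVT n (rowShape s) t) {i c : ℕ} :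
    MinusCol n s t i c ↔ (i + 1) ∈ t 0 c ∧ i ∉ t 0 c := by
  simp only [MinusCol, colSign_eq_some_false_iff, colHas_row_iff ht]
  refine ⟨fun h => h.2.1, fun h => ⟨lt_of_mem_box ht h.1, h, ?_⟩⟩
  refine pctr_filterMap_drop_range_eq_zero fun j hcj _ hsign => ?_
  have := le_of_mem_box_of_lt ht hcj h.1
    ((colHas_row_iff ht).mp (colSign_eq_some_true_iff.mp hsign).1)
  omega

end OneRow

def extraEntries (s : ℕ) (t : Filling) : Finset ℕ :=
  (Finset.range s).biUnion fun c => (t 0 c).erase (minE (t 0 c))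

lemma uncrowdRest_eq_sort (s : ℕ) (t : Filling) :
    uncrowdRest s t = (extraEntries s t).sort (· ≤ ·) := rfl

lemma mem_extraEntries {s : ℕ} {t : Filling} {x : ℕ} :
    x ∈ extraEntries s t ↔ ∃ c, c < s ∧ x ∈ t 0 c ∧ x ≠ minE (t 0 c) := by
  simp only [extraEntries, Finset.mem_biUnion, Finset.mem_range, Finset.mem_erase]
  tauto

lemma sort_insert_erase {E : Finset ℕ} {x y : ℕ} (hx : x ∈ E) (hy : y ∉ E)
    (hxy : ∀ z ∈ E, z ≠ x → (z < x ↔ z < y)) :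
    (insert y (E.erase x)).sort (· ≤ ·) =
      (E.sort (· ≤ ·)).map (fun z => if z = x then y else z) := by
  have hlt : ∀ z ∈ E, ∀ w ∈ E, z < w →
      (if z = x then y else z) < (if w = x then y else w) := by
    intro z hz w hw hzw
    have hzy : z ≠ y := fun h => hy (h ▸ hz)
    have hwy : w ≠ y := fun h => hy (h ▸ hw)
    have := hxy z hz
    have := hxy w hw
    split_ifs <;> omega
  refine (Finset.sortedLT_sort _).eq_of_mem_iff ?_ fun z => ?_
  · refine List.sortedLT_iff_pairwise.mpr (List.pairwise_map.mpr ?_)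
    exact (Finset.sortedLT_sort E).pairwise.imp_of_mem fun ha hb h =>
      hlt _ ((Finset.mem_sort _).mp ha) _ ((Finset.mem_sort _).mp hb) h
  · simp only [Finset.mem_sort, Finset.mem_insert, Finset.mem_erase, List.mem_map]
    constructor
    · rintro (rfl | ⟨hzx, hz⟩)
      · exact ⟨x, hx, if_pos rfl⟩
      · exact ⟨z, hz, if_neg hzx⟩
    · rintro ⟨w, hw, rfl⟩
      split_ifs with hwx
      · exact Or.inl rfl
      · exact Or.inr ⟨hwx, hw⟩

section Uncrowd

variable {n s : ℕ} {t : Filling}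

lemma minE_box_zero_lt_of_mem_extraEntries (ht : IsSVT n (rowShape s) t) {x : ℕ}
    (hx : x ∈ extraEntries s t) : minE (t 0 0) < x := by
  obtain ⟨c, hc, hmem, hne⟩ := mem_extraEntries.mp hx
  exact (minE_box_mono ht (Nat.zero_le c) hc).trans_lt ((minE_le hmem).lt_of_ne hne.symm)

lemma card_extraEntries_lt (ht : IsSVT n (rowShape s) t) (hn : 1 ≤ n) :
    (extraEntries s t).card < n := by
  have hsub : extraEntries s t ⊆ Finset.Icc 2 n := by
    intro x hx
    obtain ⟨c, hc, hmem, -⟩ := mem_extraEntries.mp hx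
    have h0 := ht.entryBounds 0 0 _ (minE_mem_box ht (Nat.zero_lt_of_lt hc))
    have := minE_box_zero_lt_of_mem_extraEntries ht hx
    have := ht.entryBounds 0 c x hmem
    simp only [Finset.mem_Icc]
    omega
  have := Finset.card_le_card hsub
  rw [Nat.card_Icc] at this
  omega

lemma succ_lt_of_lt_length_uncrowdRest (ht : IsSVT n (rowShape s) t) (hn : 1 ≤ n) {k : ℕ}
    (hk : k < (uncrowdRest s t).length) : k + 1 < n := by
  have := card_extraEntries_lt ht hn
  rw [uncrowdRest_eq_sort, Finset.length_sort] at hk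
  omega

lemma excess_rowShape (ht : IsSVT n (rowShape s) t) (hn : 1 ≤ n) :
    excess n (rowShape s) t = (extraEntries s t).card := by
  rw [excess, Finset.sum_product, Finset.sum_eq_single_of_mem 0 (Finset.mem_range.mpr hn)
    fun r _ hr => Finset.sum_eq_zero fun c _ => by simp [box_eq_empty_of_ne_zero ht hr],
    extraEntries, Finset.card_biUnion]
  · refine Finset.sum_congr rfl fun c hc => ?_
    rw [Finset.card_erase_of_mem (minE_mem_box ht (Finset.mem_range.mp hc))]
  · intro c _ c' _ hne
    simp only [Function.onFun, Finset.disjoint_left, Finset.mem_erase]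
    exact fun x hx hx' => hne (eq_of_mem_of_ne_minE ht hx.2 hx.1 hx'.2 hx'.1)

lemma length_uncrowdRest : (uncrowdRest s t).length = (extraEntries s t).card :=
  Finset.length_sort _

lemma mem_uncrowdRest {x : ℕ} : x ∈ uncrowdRest s t ↔ x ∈ extraEntries s t :=
  Finset.mem_sort _

lemma getD_uncrowdRest_mem {k : ℕ} (hk : k < (uncrowdRest s t).length) :
    (uncrowdRest s t).getD k 0 ∈ extraEntries s t := by
  rw [List.getD_eq_getElem _ _ hk]
  exact mem_uncrowdRest.mp (List.getElem_mem hk)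

lemma getD_uncrowdRest_inj {k k' : ℕ} (hk : k < (uncrowdRest s t).length)
    (hk' : k' < (uncrowdRest s t).length)
    (h : (uncrowdRest s t).getD k 0 = (uncrowdRest s t).getD k' 0) : k = k' := by
  rw [List.getD_eq_getElem _ _ hk, List.getD_eq_getElem _ _ hk'] at h
  exact Fin.mk.inj_iff.mp ((Finset.sortedLT_sort _).strictMono_get.injective h)

lemma getD_uncrowdRest_lt {k k' : ℕ} (hkk : k < k') (hk' : k' < (uncrowdRest s t).length) :
    (uncrowdRest s t).getD k 0 < (uncrowdRest s t).getD k' 0 := by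
  rw [List.getD_eq_getElem _ _ (hkk.trans hk'), List.getD_eq_getElem _ _ hk']
  exact (Finset.sortedLT_sort _).strictMono_get
    (show (⟨k, hkk.trans hk'⟩ : Fin _) < ⟨k', hk'⟩ from hkk)

lemma exists_getD_uncrowdRest_eq {x : ℕ} (hx : x ∈ extraEntries s t) :
    ∃ k, k < (uncrowdRest s t).length ∧ (uncrowdRest s t).getD k 0 = x := by
  obtain ⟨k, hk, hkx⟩ := List.getElem_of_mem (mem_uncrowdRest.mpr hx)
  exact ⟨k, hk, by rw [List.getD_eq_getElem _ _ hk, hkx]⟩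

end Uncrowd

section PsiShape

variable {n s : ℕ} {t : Filling}

lemma Psi_zero {c : ℕ} (hc : c < s) : Psi s t 0 c = {minE (t 0 c)} := by
  simp [Psi, hc]

lemma Psi_leg {r : ℕ} (hr : 1 ≤ r) (hr' : r ≤ (uncrowdRest s t).length) :
    Psi s t r 0 = {(uncrowdRest s t).getD (r - 1) 0} := by
  simp [Psi, hr, hr', show r ≠ 0 by omega]

lemma Psi_eq_empty {r c : ℕ} (h : ¬ (r = 0 ∧ c < s))
    (h' : ¬ (c = 0 ∧ 1 ≤ r ∧ r ≤ (uncrowdRest s t).length)) : Psi s t r c = ∅ := by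
  rw [Psi, if_neg h, if_neg h']

lemma mem_Psi_iff {a r c : ℕ} :
    a ∈ Psi s t r c ↔ (r = 0 ∧ c < s ∧ a = minE (t 0 c)) ∨
      (c = 0 ∧ 1 ≤ r ∧ r ≤ (uncrowdRest s t).length ∧
        a = (uncrowdRest s t).getD (r - 1) 0) := by
  unfold Psi
  split_ifs with h₁ h₂ <;> simp only [Finset.mem_singleton, Finset.notMem_empty] <;> grind

lemma mem_Psi_leg {k : ℕ} (hk : k < (uncrowdRest s t).length) :
    (uncrowdRest s t).getD k 0 ∈ Psi s t (k + 1) 0 := by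
  simp [Psi_leg (Nat.le_add_left 1 k) hk]

lemma colHas_Psi_of_pos (hn : 1 ≤ n) {a c : ℕ} (hc : 0 < c) :
    colHas n (Psi s t) a c ↔ c < s ∧ a = minE (t 0 c) := by
  constructor
  · rintro ⟨r, -, hm⟩
    rcases mem_Psi_iff.mp hm with ⟨-, hcs, h⟩ | ⟨rfl, -⟩
    · exact ⟨hcs, h⟩
    · omega
  · rintro ⟨hcs, rfl⟩
    exact ⟨0, hn, by simp [Psi_zero hcs]⟩

lemma colHas_Psi_zero (ht : IsSVT n (rowShape s) t) (hn : 1 ≤ n) (hs : 0 < s) {a : ℕ} :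
    colHas n (Psi s t) a 0 ↔ a = minE (t 0 0) ∨ a ∈ extraEntries s t := by
  constructor
  · rintro ⟨r, -, hm⟩
    rcases mem_Psi_iff.mp hm with ⟨-, -, h⟩ | ⟨-, hr, hr', rfl⟩
    · exact Or.inl h
    · exact Or.inr (getD_uncrowdRest_mem (by omega))
  · rintro (rfl | h)
    · exact ⟨0, hn, by simp [Psi_zero hs]⟩
    · obtain ⟨k, hk, rfl⟩ := exists_getD_uncrowdRest_eq h
      exact ⟨k + 1, succ_lt_of_lt_length_uncrowdRest ht hn hk, mem_Psi_leg hk⟩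

lemma eq_of_mem_Psi_col_zero (ht : IsSVT n (rowShape s) t) {a r r' : ℕ}
    (h : a ∈ Psi s t r 0) (h' : a ∈ Psi s t r' 0) : r = r' := by
  have hnot : ∀ k, k < (uncrowdRest s t).length → (uncrowdRest s t).getD k 0 ≠ minE (t 0 0) :=
    fun k hk => (minE_box_zero_lt_of_mem_extraEntries ht (getD_uncrowdRest_mem hk)).ne'
  rcases mem_Psi_iff.mp h with ⟨rfl, -, rfl⟩ | ⟨-, hr, hr', rfl⟩ <;>
    rcases mem_Psi_iff.mp h' with ⟨rfl, -, ha⟩ | ⟨-, hs, hs', ha⟩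
  · rfl
  · exact absurd ha.symm (hnot _ (by omega))
  · exact absurd ha (hnot _ (by omega))
  · have := getD_uncrowdRest_inj (by omega) (by omega) ha
    omega

lemma eq_zero_of_minE_mem_Psi (ht : IsSVT n (rowShape s) t) {r c : ℕ}
    (h : minE (t 0 c) ∈ Psi s t r c) : r = 0 := by
  rcases mem_Psi_iff.mp h with ⟨rfl, -⟩ | ⟨rfl, hr, hr', h⟩
  · rfl
  · have := minE_box_zero_lt_of_mem_extraEntries ht (getD_uncrowdRest_mem (s := s) (t := t)
      (k := r - 1) (by omega))
    omega

lemma Psi_eq_updateBox_zero {t' : Filling} {d v : ℕ} (hd : d < s)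
    (hmin : ∀ c, c < s → c ≠ d → minE (t' 0 c) = minE (t 0 c)) (hmind : minE (t' 0 d) = v)
    (hE : extraEntries s t' = extraEntries s t) :
    Psi s t' = updateBox (Psi s t) 0 d {v} := by
  funext r c
  by_cases hrc : r = 0 ∧ c = d
  · obtain ⟨rfl, rfl⟩ := hrc
    rw [updateBox_same, Psi_zero hd, hmind]
  rw [updateBox_of_ne _ _ _ _ hrc]
  by_cases h : r = 0 ∧ c < s
  · rw [h.1, Psi_zero h.2, Psi_zero h.2, hmin c h.2 fun hc => hrc ⟨h.1, hc⟩]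
  · have hL : uncrowdRest s t' = uncrowdRest s t := by
      rw [uncrowdRest_eq_sort, uncrowdRest_eq_sort, hE]
    simp only [Psi, if_neg h, hL]

lemma Psi_eq_updateBox_leg {t' : Filling} {k x y : ℕ}
    (hmin : ∀ c, c < s → minE (t' 0 c) = minE (t 0 c)) (hk : k < (uncrowdRest s t).length)
    (hkx : (uncrowdRest s t).getD k 0 = x) (hy : y ∉ extraEntries s t)
    (hxy : ∀ z ∈ extraEntries s t, z ≠ x → (z < x ↔ z < y))
    (hE : extraEntries s t' = insert y ((extraEntries s t).erase x)) :
    Psi s t' = updateBox (Psi s t) (k + 1) 0 {y} := by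
  have hL : uncrowdRest s t' = (uncrowdRest s t).map fun z => if z = x then y else z := by
    rw [uncrowdRest_eq_sort, uncrowdRest_eq_sort, hE,
      sort_insert_erase (hkx ▸ getD_uncrowdRest_mem hk) hy hxy]
  have hget : ∀ j, j < (uncrowdRest s t).length → (uncrowdRest s t').getD j 0 =
      if (uncrowdRest s t).getD j 0 = x then y else (uncrowdRest s t).getD j 0 := by
    intro j hj
    rw [List.getD_eq_getElem _ _ (by simpa [hL] using hj), List.getD_eq_getElem _ _ hj]
    simp only [hL, List.getElem_map]
  have hlen : (uncrowdRest s t').length = (uncrowdRest s t).length := by simp [hL]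
  funext r c
  by_cases hrc : r = k + 1 ∧ c = 0
  · obtain ⟨rfl, rfl⟩ := hrc
    rw [updateBox_same, Psi_leg (by omega) (by omega), Nat.add_sub_cancel, hget k hk, hkx,
      if_pos rfl]
  rw [updateBox_of_ne _ _ _ _ hrc]
  by_cases h : r = 0 ∧ c < s
  · rw [h.1, Psi_zero h.2, Psi_zero h.2, hmin c h.2]
  by_cases hleg : c = 0 ∧ 1 ≤ r ∧ r ≤ (uncrowdRest s t).length
  · obtain ⟨rfl, hr, hr'⟩ := hleg
    rw [Psi_leg hr (by omega), Psi_leg hr hr', hget (r - 1) (by omega), if_neg]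
    intro hcon
    have := getD_uncrowdRest_inj (by omega) hk (hcon.trans hkx.symm)
    omega
  · rw [Psi_eq_empty h (by omega), Psi_eq_empty h hleg]

lemma isSSYT_Psi (ht : IsSVT n (rowShape s) t) (hn : 1 ≤ n) :
    IsSSYT n (hookShape s (excess n (rowShape s) t)) (Psi s t) := by
  have hlen : (uncrowdRest s t).length = excess n (rowShape s) t := by
    rw [length_uncrowdRest, excess_rowShape ht hn]
  have hshape : ∀ r c, c < hookShape s (excess n (rowShape s) t) r →
      Psi s t r c = {minE (t 0 c)} ∨ Psi s t r c = {(uncrowdRest s t).getD (r - 1) 0} := by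
    intro r c hc
    rcases lt_hookShape_iff.mp hc with ⟨rfl, hcs⟩ | ⟨hr, hre, rfl⟩
    · exact Or.inl (Psi_zero hcs)
    · exact Or.inr (Psi_leg (by omega) (by omega))
  refine ⟨⟨fun r c hc => ?_, fun r c hc => ?_, fun r c a ha => ?_, fun r c a b ha hb => ?_,
    fun r c a b ha hb => ?_⟩, fun r c hc => ?_⟩
  · rcases hshape r c hc with h | h <;> simp [h]
  · refine Finset.eq_empty_iff_forall_notMem.mpr fun a ha => hc ?_
    rcases mem_Psi_iff.mp ha with ⟨rfl, hcs, -⟩ | ⟨rfl, hr, hr', -⟩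
    · exact lt_hookShape_iff.mpr (Or.inl ⟨rfl, hcs⟩)
    · exact lt_hookShape_iff.mpr (Or.inr ⟨by omega, by omega, rfl⟩)
  · rcases mem_Psi_iff.mp ha with ⟨rfl, hcs, rfl⟩ | ⟨rfl, hr, hr', rfl⟩
    · exact ht.entryBounds 0 c _ (minE_mem_box ht hcs)
    · obtain ⟨c, -, hmem, -⟩ := mem_extraEntries.mp (getD_uncrowdRest_mem (s := s) (t := t)
        (k := r - 1) (by omega))
      have := ht.entryBounds 0 c _ hmem
      omega
  · rcases mem_Psi_iff.mp ha with ⟨rfl, -, rfl⟩ | ⟨rfl, hr, -⟩ <;>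
      rcases mem_Psi_iff.mp hb with ⟨hr0, hcs, rfl⟩ | ⟨h, -⟩
    · exact minE_box_mono ht (Nat.le_succ c) hcs
    all_goals omega
  · rcases mem_Psi_iff.mp hb with ⟨h, -⟩ | ⟨rfl, -, hr', rfl⟩
    · omega
    rcases mem_Psi_iff.mp ha with ⟨rfl, -, rfl⟩ | ⟨-, hr, -, rfl⟩
    · exact minE_box_zero_lt_of_mem_extraEntries ht (getD_uncrowdRest_mem (by omega))
    · exact getD_uncrowdRest_lt (by omega) (by omega)
  · rcases hshape r c hc with h | h <;> simp [h]

lemma minE_Psi_zero {c : ℕ} (hc : c < s) : minE (Psi s t 0 c) = minE (t 0 c) := by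
  rw [Psi_zero hc, minE_singleton]

lemma mem_extraEntries_iff_mem_Psi {x : ℕ} :
    x ∈ extraEntries s t ↔ ∃ r, r ≠ 0 ∧ x ∈ Psi s t r 0 := by
  constructor
  · intro hx
    obtain ⟨k, hk, rfl⟩ := exists_getD_uncrowdRest_eq hx
    exact ⟨k + 1, k.succ_ne_zero, mem_Psi_leg hk⟩
  · rintro ⟨r, hr, hx⟩
    rcases mem_Psi_iff.mp hx with ⟨h, -⟩ | ⟨-, hr1, hr', rfl⟩
    · exact absurd h hr
    · exact getD_uncrowdRest_mem (by omega)

end PsiShape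

def crowd (s : ℕ) (m : ℕ → ℕ) (E : Finset ℕ) : Filling := fun r c =>
  if r = 0 ∧ c < s then
    insert (m c) (E.filter fun x => m c < x ∧ (c + 1 < s → x ≤ m (c + 1)))
  else ∅

section Crowd

variable {n s : ℕ} {m : ℕ → ℕ} {E : Finset ℕ}

lemma crowd_zero {c : ℕ} (hc : c < s) :
    crowd s m E 0 c =
      insert (m c) (E.filter fun x => m c < x ∧ (c + 1 < s → x ≤ m (c + 1))) :=
  if_pos ⟨rfl, hc⟩

lemma crowd_eq_empty {r c : ℕ} (h : ¬ (r = 0 ∧ c < s)) : crowd s m E r c = ∅ := if_neg h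

lemma minE_crowd {c : ℕ} (hc : c < s) : minE (crowd s m E 0 c) = m c := by
  rw [crowd_zero hc]
  refine minE_eq (Finset.mem_insert_self _ _) fun y hy => ?_
  rcases Finset.mem_insert.mp hy with rfl | hy
  · exact le_rfl
  · exact (Finset.mem_filter.mp hy).2.1.le

lemma crowd_congr {m' : ℕ → ℕ} (h : ∀ c, c < s → m c = m' c) :
    crowd s m E = crowd s m' E := by
  funext r c
  by_cases hrc : r = 0 ∧ c < s
  · rw [hrc.1, crowd_zero hrc.2, crowd_zero hrc.2, h c hrc.2]
    congr 1
    refine Finset.filter_congr fun x _ => ?_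
    constructor <;> rintro ⟨h₁, h₂⟩ <;> refine ⟨h₁, fun hc => ?_⟩ <;> simp_all
  · rw [crowd_eq_empty hrc, crowd_eq_empty hrc]

lemma isSVT_crowd (hm : ∀ c, c + 1 < s → m c ≤ m (c + 1))
    (hmb : ∀ c, c < s → 1 ≤ m c ∧ m c ≤ n)
    (hEb : ∀ x ∈ E, x ≤ n) : IsSVT n (rowShape s) (crowd s m E) := by
  have hbox : ∀ {c x}, c < s → x ∈ crowd s m E 0 c →
      x = m c ∨ (x ∈ E ∧ m c < x ∧ (c + 1 < s → x ≤ m (c + 1))) := by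
    intro c x hc hx
    simpa [crowd_zero hc] using hx
  have hzero : ∀ {r c x}, x ∈ crowd s m E r c → r = 0 ∧ c < s := by
    intro r c x hx
    by_contra h
    simp [crowd_eq_empty h] at hx
  refine ⟨fun r c hc => ?_, fun r c hc => crowd_eq_empty ?_, fun r c a ha => ?_,
    fun r c a b ha hb => ?_, fun r c a b _ hb => absurd (hzero hb).1 (by omega)⟩
  · obtain ⟨rfl, hcs⟩ := lt_rowShape_iff.mp hc
    exact ⟨_, crowd_zero hcs ▸ Finset.mem_insert_self _ _⟩
  · exact fun h => hc (lt_rowShape_iff.mpr h)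
  · obtain ⟨rfl, hc⟩ := hzero ha
    have := hmb c hc
    rcases hbox hc ha with rfl | ⟨hE, hlt, -⟩
    · exact this
    · exact ⟨by omega, hEb a hE⟩
  · obtain ⟨rfl, hc⟩ := hzero hb
    have hb' : m (c + 1) ≤ b := by
      rcases hbox hc hb with rfl | ⟨-, hlt, -⟩ <;> omega
    rcases hbox (by omega) ha with rfl | ⟨-, -, hle⟩
    · exact (hm c hc).trans hb'
    · exact (hle hc).trans hb'

lemma extraEntries_crowd (hs : 0 < s) (hE : ∀ x ∈ E, m 0 < x) :
    extraEntries s (crowd s m E) = E := by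
  ext x
  simp only [mem_extraEntries]
  constructor
  · rintro ⟨c, hc, hx, hne⟩
    rw [minE_crowd hc] at hne
    rw [crowd_zero hc, Finset.mem_insert, Finset.mem_filter] at hx
    exact hx.resolve_left hne |>.1
  · intro hx
    set c := Nat.findGreatest (fun c => m c < x) (s - 1)
    have hcx : m c < x := Nat.findGreatest_spec (P := fun c => m c < x) (Nat.zero_le _) (hE x hx)
    have hcs : c < s := by have := Nat.findGreatest_le (P := fun c => m c < x) (s - 1); omega
    refine ⟨c, hcs, ?_, by rw [minE_crowd hcs]; omega⟩
    rw [crowd_zero hcs]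
    refine Finset.mem_insert_of_mem (Finset.mem_filter.mpr ⟨hx, hcx, fun hc1 => ?_⟩)
    by_contra hlt
    have : c + 1 ≤ c := Nat.le_findGreatest (by omega) (not_le.mp hlt)
    omega

end Crowd

section Injectivity

variable {n s : ℕ} {t : Filling}

lemma crowd_eq_self (ht : IsSVT n (rowShape s) t) :
    crowd s (fun c => minE (t 0 c)) (extraEntries s t) = t := by
  funext r c
  by_cases hrc : r = 0 ∧ c < s
  swap
  · rw [crowd_eq_empty hrc]
    exact (ht.emptyOutside r c (fun h => hrc (lt_rowShape_iff.mp h))).symm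
  obtain ⟨rfl, hc⟩ := hrc
  ext y
  simp only [crowd_zero hc, Finset.mem_insert, Finset.mem_filter, mem_extraEntries]
  constructor
  · rintro (rfl | ⟨⟨c', hc', hy, hne⟩, hlt, hle⟩)
    · exact minE_mem_box ht hc
    rcases Nat.lt_trichotomy c' c with h | rfl | h
    · exact absurd (le_of_mem_box_of_lt ht h hy (minE_mem_box ht hc)) (not_le.mpr hlt)
    · exact hy
    · have := hle (by omega)
      have := minE_box_mono ht (show c + 1 ≤ c' by omega) hc'
      have := (minE_le hy).lt_of_ne hne.symm
      omega
  · intro hy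
    by_cases hym : y = minE (t 0 c)
    · exact Or.inl hym
    · exact Or.inr ⟨⟨c, hc, hy, hym⟩, (minE_le hy).lt_of_ne (Ne.symm hym),
        fun hc1 => ht.rowWeak 0 c y _ hy (minE_mem_box ht hc1)⟩

lemma Psi_injective {t' : Filling} (ht : IsSVT n (rowShape s) t)
    (ht' : IsSVT n (rowShape s) t') (h : Psi s t = Psi s t') : t = t' := by
  have hmin : ∀ c, c < s → minE (t 0 c) = minE (t' 0 c) := fun c hc => by
    rw [← minE_Psi_zero hc, h, minE_Psi_zero hc]
  have hE : extraEntries s t = extraEntries s t' := by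
    ext x
    rw [mem_extraEntries_iff_mem_Psi, mem_extraEntries_iff_mem_Psi, h]
  rw [← crowd_eq_self ht, ← crowd_eq_self ht', hE, crowd_congr hmin]

end Injectivity

lemma IsSSYT.eq_singleton {n : ℕ} {lam : ℕ → ℕ} {u : Filling} (hu : IsSSYT n lam u)
    {r c : ℕ} (h : c < lam r) : u r c = {minE (u r c)} := by
  obtain ⟨a, ha⟩ := Finset.card_eq_one.mp (hu.2 r c h)
  rw [ha, minE_singleton]

lemma sort_image_range {e : ℕ} {ν : ℕ → ℕ}
    (hν : ∀ k k', k < k' → k' < e → ν k < ν k') :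
    ((Finset.range e).image ν).sort (· ≤ ·) = (List.range e).map ν := by
  refine (Finset.sortedLT_sort _).eq_of_mem_iff ?_ fun x => by simp
  refine List.sortedLT_iff_pairwise.mpr (List.pairwise_map.mpr ?_)
  exact List.pairwise_lt_range.imp_of_mem fun _ hb h => hν _ _ h (List.mem_range.mp hb)

def legEntries (e : ℕ) (u : Filling) : Finset ℕ :=
  (Finset.range e).image fun k => minE (u (k + 1) 0)

section Surjectivity

variable {n s e : ℕ} {u : Filling}

lemma hook_minE_lt (hu : IsSVT n (hookShape s e) u) (hs : 0 < s) {r r' : ℕ} (hrr : r < r')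
    (hr' : r' ≤ e) : minE (u r 0) < minE (u r' 0) := by
  have hne : ∀ r, r ≤ e → (u r 0).Nonempty := fun r hr =>
    hu.boxNonempty r 0 (lt_hookShape_iff.mpr (by omega))
  induction r' with
  | zero => omega
  | succ d ih =>
    have hstep := hu.colStrict d 0 _ _ (minE_mem (hne d (by omega))) (minE_mem (hne (d + 1) hr'))
    rcases Nat.lt_or_ge r d with h | h
    · exact (ih h (by omega)).trans hstep
    · obtain rfl : r = d := by omega
      exact hstep

lemma minE_zero_lt_of_mem_legEntries (hu : IsSVT n (hookShape s e) u) (hs : 0 < s) {x : ℕ}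
    (hx : x ∈ legEntries e u) : minE (u 0 0) < x := by
  obtain ⟨k, hk, rfl⟩ := Finset.mem_image.mp hx
  exact hook_minE_lt hu hs (Nat.succ_pos k) (Finset.mem_range.mp hk)

lemma isSVT_crowd_legEntries (hu : IsSVT n (hookShape s e) u) :
    IsSVT n (rowShape s) (crowd s (fun c => minE (u 0 c)) (legEntries e u)) := by
  have hmem : ∀ r c, c < hookShape s e r → minE (u r c) ∈ u r c := fun r c h =>
    minE_mem (hu.boxNonempty r c h)
  refine isSVT_crowd (fun c hc => hu.rowWeak 0 c _ _ (hmem 0 c (by simp [hookShape]; omega))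
    (hmem 0 (c + 1) (by simpa [hookShape]))) (fun c hc => hu.entryBounds 0 c _
    (hmem 0 c (by simpa [hookShape]))) fun x hx => ?_
  obtain ⟨k, hk, rfl⟩ := Finset.mem_image.mp hx
  exact (hu.entryBounds (k + 1) 0 _
    (hmem (k + 1) 0 (lt_hookShape_iff.mpr (by simp at hk; omega)))).2

lemma Psi_surjective (hu : IsSSYT n (hookShape s e) u) (hn : 1 ≤ n) (hs : 0 < s) :
    ∃ t, IsSVT n (rowShape s) t ∧ excess n (rowShape s) t = e ∧ Psi s t = u := by
  have hsvt := isSVT_crowd_legEntries hu.1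
  have hν : ∀ k k', k < k' → k' < e → minE (u (k + 1) 0) < minE (u (k' + 1) 0) :=
    fun k k' h h' => hook_minE_lt hu.1 hs (by omega) (by omega)
  have hE := extraEntries_crowd (m := fun c => minE (u 0 c)) hs
    fun x hx => minE_zero_lt_of_mem_legEntries hu.1 hs hx
  have hL : uncrowdRest s (crowd s (fun c => minE (u 0 c)) (legEntries e u)) =
      (List.range e).map fun k => minE (u (k + 1) 0) := by
    rw [uncrowdRest_eq_sort, hE, legEntries, sort_image_range hν]
  refine ⟨_, hsvt, ?_, funext₂ fun r c => ?_⟩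
  · rw [excess_rowShape hsvt hn, hE, legEntries, Finset.card_image_of_injOn, Finset.card_range]
    intro k hk k' hk' h
    by_contra hne
    rcases Nat.lt_or_gt_of_ne hne with hlt | hlt
    · exact (hν k k' hlt (by simpa using hk')).ne h
    · exact (hν k' k hlt (by simpa using hk)).ne' h
  by_cases h0 : r = 0 ∧ c < s
  · rw [h0.1, Psi_zero h0.2, minE_crowd h0.2, ← hu.eq_singleton (by simp [hookShape, h0.2])]
  by_cases hl : c = 0 ∧ 1 ≤ r ∧ r ≤ e
  · obtain ⟨rfl, hr, hre⟩ := hl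
    obtain ⟨k, rfl⟩ : ∃ k, r = k + 1 := ⟨r - 1, by omega⟩
    rw [Psi_leg hr (by simp [hL, hre]), hL, hu.eq_singleton (lt_hookShape_iff.mpr (by omega))]
    simp [List.getElem?_range (show k < e by omega)]
  · rw [Psi_eq_empty h0 (by simpa [hL] using hl), hu.1.emptyOutside r c]
    rw [lt_hookShape_iff]
    omega

end Surjectivity

lemma sum_boole_eq_ite {S : Finset ℕ} {P : ℕ → Prop} {Q : Prop} [DecidablePred P]
    [Decidable Q] (huniq : ∀ x ∈ S, ∀ y ∈ S, P x → P y → x = y) (hQ : Q ↔ ∃ x ∈ S, P x) :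
    (∑ x ∈ S, if P x then 1 else 0) = if Q then 1 else 0 := by
  by_cases hq : Q
  · obtain ⟨x, hx, hPx⟩ := hQ.mp hq
    rw [if_pos hq, Finset.sum_eq_single_of_mem x hx fun y hy hyx =>
      if_neg fun hPy => hyx (huniq y hy x hx hPy hPx), if_pos hPx]
  · rw [if_neg hq]
    exact Finset.sum_eq_zero fun x hx => if_neg fun hPx => hq (hQ.mpr ⟨x, hx, hPx⟩)

lemma wt_eq_sum (n : ℕ) (lam : ℕ → ℕ) (t : Filling) (j : ℕ) :
    wt n lam t j =
      ∑ r ∈ Finset.range n, ∑ c ∈ Finset.range (lam 0), if j ∈ t r c then 1 else 0 := by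
  rw [wt, Finset.card_filter, Finset.sum_product]

section Weight

variable {n s : ℕ} {t : Filling}

lemma wt_rowShape (ht : IsSVT n (rowShape s) t) (hn : 1 ≤ n) (j : ℕ) :
    wt n (rowShape s) t j = (∑ c ∈ Finset.range s, if j = minE (t 0 c) then 1 else 0) +
      if j ∈ extraEntries s t then 1 else 0 := by
  rw [wt_eq_sum, Finset.sum_eq_single_of_mem 0 (Finset.mem_range.mpr hn)
    fun r _ hr => Finset.sum_eq_zero fun c _ => by simp [box_eq_empty_of_ne_zero ht hr]]
  have hsplit : ∀ c ∈ Finset.range s, (if j ∈ t 0 c then 1 else 0) =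
      (if j = minE (t 0 c) then 1 else 0) +
        if j ∈ t 0 c ∧ j ≠ minE (t 0 c) then 1 else 0 := by
    intro c hc
    have := minE_mem_box ht (Finset.mem_range.mp hc)
    by_cases h : j = minE (t 0 c) <;> simp_all
  rw [show rowShape s 0 = s from rfl, Finset.sum_congr rfl hsplit, Finset.sum_add_distrib,
    sum_boole_eq_ite (P := fun c => j ∈ t 0 c ∧ j ≠ minE (t 0 c))
      (Q := j ∈ extraEntries s t)
      (fun c _ c' _ h h' => eq_of_mem_of_ne_minE ht h.1 h.2 h'.1 h'.2)
      (by simp only [mem_extraEntries, Finset.mem_range])]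

lemma wt_Psi (ht : IsSVT n (rowShape s) t) (hn : 1 ≤ n) (hs : 0 < s) (j : ℕ) :
    wt n (hookShape s (excess n (rowShape s) t)) (Psi s t) j =
      (∑ c ∈ Finset.range s, if j = minE (t 0 c) then 1 else 0) +
        if j ∈ extraEntries s t then 1 else 0 := by
  obtain ⟨n, rfl⟩ : ∃ n', n = n' + 1 := ⟨n - 1, by omega⟩
  rw [wt_eq_sum, Finset.sum_range_succ', add_comm]
  change _ + ∑ r ∈ Finset.range n, ∑ c ∈ Finset.range s, _ = _
  congr 1
  · exact Finset.sum_congr rfl fun c hc => by simp [Psi_zero (Finset.mem_range.mp hc)]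
  · rw [Finset.sum_congr rfl fun r _ => Finset.sum_eq_single_of_mem 0 (Finset.mem_range.mpr hs)
      fun c _ hc => by rw [Psi_eq_empty (by omega) (by omega)]; simp]
    refine sum_boole_eq_ite (P := fun r => j ∈ Psi s t (r + 1) 0) (fun r _ r' _ h h' => by
      simpa using eq_of_mem_Psi_col_zero ht h h') ?_
    rw [mem_extraEntries_iff_mem_Psi]
    constructor
    · rintro ⟨r, hr, hj⟩
      obtain ⟨r, rfl⟩ : ∃ r', r = r' + 1 := ⟨r - 1, by omega⟩
      refine ⟨r, Finset.mem_range.mpr ?_, hj⟩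
      rcases mem_Psi_iff.mp hj with ⟨h, -⟩ | ⟨-, -, hr', -⟩
      · omega
      · have := succ_lt_of_lt_length_uncrowdRest (k := r) ht (by omega) (by omega)
        omega
    · rintro ⟨r, -, hj⟩
      exact ⟨r + 1, r.succ_ne_zero, hj⟩

end Weight

section HookSignature

variable {n s i : ℕ} {t : Filling}

lemma colSign_Psi_eq_some_true_iff (hn : 1 ≤ n) {c : ℕ} (hc : 0 < c) :
    colSign n (Psi s t) i c = some true ↔ c < s ∧ minE (t 0 c) = i := by
  rw [colSign_eq_some_true_iff, colHas_Psi_of_pos hn hc, colHas_Psi_of_pos hn hc]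
  omega

lemma colSign_Psi_eq_some_false_iff (hn : 1 ≤ n) {c : ℕ} (hc : 0 < c) :
    colSign n (Psi s t) i c = some false ↔ c < s ∧ minE (t 0 c) = i + 1 := by
  rw [colSign_eq_some_false_iff, colHas_Psi_of_pos hn hc, colHas_Psi_of_pos hn hc]
  omega

lemma plusCol_Psi_zero_iff (hs : 0 < s) :
    PlusCol n s (Psi s t) i 0 ↔ colSign n (Psi s t) i 0 = some true := by
  simp [PlusCol, colWordBefore, mctr, hs]

lemma plusCol_Psi_iff_of_pos (ht : IsSVT n (rowShape s) t) (hn : 1 ≤ n) {c : ℕ} (hc : 0 < c) :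
    PlusCol n s (Psi s t) i c ↔ c < s ∧ minE (t 0 c) = i ∧
      (colSign n (Psi s t) i 0 ≠ some false ∨ ∃ j, 0 < j ∧ j < c ∧ minE (t 0 j) = i) := by
  rw [PlusCol, colSign_Psi_eq_some_true_iff hn hc, and_assoc]
  refine and_congr_right fun hcs => ?_
  rw [and_iff_right hcs]
  refine and_congr_right fun hmc => ?_
  obtain ⟨c, rfl⟩ : ∃ c', c = c' + 1 := ⟨c - 1, by omega⟩
  have hfalse : ∀ j, 0 < j → j ≤ c → colSign n (Psi s t) i j ≠ some false := by
    intro j hj hjc h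
    have := minE_box_mono ht (show j ≤ c + 1 by omega) hcs
    rw [(colSign_Psi_eq_some_false_iff hn hj).mp h |>.2] at this
    omega
  rw [colWordBefore, mctr_filterMap_range hfalse]
  have htrue : ∀ j, 0 < j → j ≤ c →
      (colSign n (Psi s t) i j = some true ↔ minE (t 0 j) = i) :=
    fun j hj hjc => by rw [colSign_Psi_eq_some_true_iff hn hj]; omega
  split_ifs with h
  · simp only [false_iff, not_or, not_not, not_exists, not_and]
    exact ⟨h.1, fun j hj hjc hmj => h.2 j hj (by omega) ((htrue j hj (by omega)).mpr hmj)⟩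
  · simp only [true_iff]
    by_contra hcon
    simp only [not_or, not_not, not_exists, not_and] at hcon
    exact h ⟨hcon.1, fun j hj hjc hmj => hcon.2 j hj (by omega) ((htrue j hj hjc).mp hmj)⟩

lemma minusCol_Psi_iff_of_pos (ht : IsSVT n (rowShape s) t) (hn : 1 ≤ n) {c : ℕ} (hc : 0 < c) :
    MinusCol n s (Psi s t) i c ↔ c < s ∧ minE (t 0 c) = i + 1 := by
  rw [MinusCol, colSign_Psi_eq_some_false_iff hn hc]
  refine ⟨fun h => h.2.1, fun h => ⟨h.1, h, ?_⟩⟩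
  refine pctr_filterMap_drop_range_eq_zero fun j hcj hjs hj => ?_
  have := minE_box_mono ht hcj.le hjs
  have := ((colSign_Psi_eq_some_true_iff hn (hc.trans hcj)).mp hj).2
  omega

lemma minusCol_Psi_zero_iff (ht : IsSVT n (rowShape s) t) (hn : 1 ≤ n) (hs : 0 < s) :
    MinusCol n s (Psi s t) i 0 ↔
      colSign n (Psi s t) i 0 = some false ∧ ∀ c, 0 < c → c < s → minE (t 0 c) ≠ i := by
  rw [MinusCol, colWordAfter]
  refine ⟨fun ⟨_, hsign, hpctr⟩ => ⟨hsign, fun c hc hcs hmc => ?_⟩,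
    fun ⟨hsign, hno⟩ =>
      ⟨hs, hsign, pctr_filterMap_drop_range_eq_zero fun j hj hjs h => ?_⟩⟩
  · have hex : ∃ c, 0 < c ∧ c < s ∧ minE (t 0 c) = i := ⟨c, hc, hcs, hmc⟩
    obtain ⟨ha, has, hma⟩ := Nat.find_spec hex
    refine pctr_filterMap_drop_range_ne_zero ha has (fun j hj hja => ?_)
      ((colSign_Psi_eq_some_true_iff hn ha).mpr ⟨has, hma⟩) hpctr
    have hmin := Nat.find_min hex hja
    have := minE_box_mono ht hja.le has
    refine colSign_eq_none ?_ ?_ <;> rw [colHas_Psi_of_pos hn hj] <;> omega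
  · exact hno j hj hjs ((colSign_Psi_eq_some_true_iff hn hj).mp h).2

end HookSignature

section HookOperators

variable {n s i : ℕ} {t : Filling}

lemma fRaw_Psi_of_row_zero (ht : IsSVT n (rowShape s) t) (hn : 1 ≤ n) {d : ℕ} (hd : d < s)
    (hmd : minE (t 0 d) = i) (hplus : PlusCol n s (Psi s t) i d)
    (hlast : ∀ c, d < c → c < s → minE (t 0 c) ≠ i) :
    fRaw n (hookShape s (excess n (rowShape s) t)) i (Psi s t) =
      some (updateBox (Psi s t) 0 d {i + 1}) := by
  have hfb : fBoxCol n s (Psi s t) i d := by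
    refine ⟨hplus, fun c hc => ?_⟩
    rcases Nat.eq_zero_or_pos c with rfl | hc0
    · exact Nat.zero_le d
    · obtain ⟨hcs, hmc⟩ := (colHas_Psi_of_pos hn hc0).mp hc.colHas
      by_contra hdc
      exact hlast c (by omega) hcs hmc.symm
  have huniq : ∀ r, r < n → i ∈ Psi s t r d → r = 0 :=
    fun r _ hr => eq_zero_of_minE_mem_Psi ht (hmd ▸ hr)
  have hnext : i ∉ Psi s t 0 (d + 1) := by
    by_cases hd1 : d + 1 < s
    · simpa [Psi_zero hd1, eq_comm] using hlast (d + 1) (by omega) hd1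
    · simp [Psi_eq_empty (r := 0) (c := d + 1) (s := s) (t := t) (by omega) (by omega)]
  rw [fRaw_eq_some hfb hn (by simp [Psi_zero hd, hmd]) huniq, if_neg hnext, Psi_zero hd, hmd,
    Finset.erase_singleton]
  rfl

lemma fRaw_Psi_of_leg (ht : IsSVT n (rowShape s) t) (hn : 1 ≤ n) (hs : 0 < s) {k : ℕ}
    (hk : k < (uncrowdRest s t).length) (hki : (uncrowdRest s t).getD k 0 = i)
    (hsign : colSign n (Psi s t) i 0 = some true)
    (hno : ∀ c, 0 < c → c < s → minE (t 0 c) ≠ i) :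
    fRaw n (hookShape s (excess n (rowShape s) t)) i (Psi s t) =
      some (updateBox (Psi s t) (k + 1) 0 {i + 1}) := by
  have hfb : fBoxCol n s (Psi s t) i 0 := by
    refine ⟨(plusCol_Psi_zero_iff hs).mpr hsign, fun c hc => ?_⟩
    by_contra hc0
    obtain ⟨hcs, hmc⟩ := (colHas_Psi_of_pos hn (by omega : 0 < c)).mp hc.colHas
    exact hno c (by omega) hcs hmc.symm
  have hmem : i ∈ Psi s t (k + 1) 0 := hki ▸ mem_Psi_leg hk
  have hkn := succ_lt_of_lt_length_uncrowdRest ht hn hk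
  have hnext : i ∉ Psi s t (k + 1) 1 := by
    simp [Psi_eq_empty (r := k + 1) (c := 1) (s := s) (t := t) (by omega) (by omega)]
  rw [fRaw_eq_some hfb hkn hmem fun r _ hr => eq_of_mem_Psi_col_zero ht hr hmem, if_neg hnext,
    Psi_leg (by omega) (by omega), Nat.add_sub_cancel, hki, Finset.erase_singleton]
  rfl

lemma eRaw_Psi_of_row_zero (ht : IsSVT n (rowShape s) t) (hn : 1 ≤ n) (hs : 0 < s) {d : ℕ}
    (hd : d < s) (hmd : minE (t 0 d) = i + 1) (hbefore : ∀ c, c < d → minE (t 0 c) ≠ i + 1)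
    (hnot0 : 0 < d → ¬ MinusCol n s (Psi s t) i 0) :
    eRaw n (hookShape s (excess n (rowShape s) t)) i (Psi s t) =
      some (updateBox (Psi s t) 0 d {i}) := by
  have hminus : MinusCol n s (Psi s t) i d := by
    rcases Nat.eq_zero_or_pos d with rfl | hd0
    · refine (minusCol_Psi_zero_iff ht hn hs).mpr
        ⟨colSign_eq_some_false_iff.mpr ⟨?_, ?_⟩, ?_⟩
      · exact (colHas_Psi_zero ht hn hs).mpr (Or.inl hmd.symm)
      · rw [colHas_Psi_zero ht hn hs]
        rintro (h | h)
        · omega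
        · have := minE_box_zero_lt_of_mem_extraEntries ht h
          omega
      · intro c _ hcs hmc
        have := minE_box_mono ht (Nat.zero_le c) hcs
        omega
    · exact (minusCol_Psi_iff_of_pos ht hn hd0).mpr ⟨hd, hmd⟩
  have heb : eBoxCol n s (Psi s t) i d := by
    refine ⟨hminus, fun c hc => ?_⟩
    by_contra hcd
    rcases Nat.eq_zero_or_pos c with rfl | hc0
    · exact hnot0 (by omega) hc
    · exact hbefore c (by omega) ((minusCol_Psi_iff_of_pos ht hn hc0).mp hc).2
  have huniq : ∀ r, r < n → (i + 1) ∈ Psi s t r d → r = 0 :=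
    fun r _ hr => eq_zero_of_minE_mem_Psi ht (hmd ▸ hr)
  have hprev : ¬ (0 < d ∧ (i + 1) ∈ Psi s t 0 (d - 1)) := by
    rintro ⟨hd0, h⟩
    rw [Psi_zero (by omega), Finset.mem_singleton] at h
    exact hbefore (d - 1) (by omega) h.symm
  rw [eRaw_eq_some heb hn (by simp [Psi_zero hd, hmd]) huniq, if_neg hprev, Psi_zero hd, hmd,
    Finset.erase_singleton]
  rfl

lemma eRaw_Psi_of_leg (ht : IsSVT n (rowShape s) t) (hn : 1 ≤ n) {k : ℕ}
    (hk : k < (uncrowdRest s t).length) (hki : (uncrowdRest s t).getD k 0 = i + 1)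
    (hminus : MinusCol n s (Psi s t) i 0) :
    eRaw n (hookShape s (excess n (rowShape s) t)) i (Psi s t) =
      some (updateBox (Psi s t) (k + 1) 0 {i}) := by
  have hmem : (i + 1) ∈ Psi s t (k + 1) 0 := hki ▸ mem_Psi_leg hk
  have hkn := succ_lt_of_lt_length_uncrowdRest ht hn hk
  rw [eRaw_eq_some ⟨hminus, fun c _ => Nat.zero_le c⟩ hkn hmem
    fun r _ hr => eq_of_mem_Psi_col_zero ht hr hmem, if_neg (by omega),
    Psi_leg (by omega) (by omega), Nat.add_sub_cancel, hki, Finset.erase_singleton]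
  rfl

lemma exists_mem_box_of_colHas_Psi_zero (ht : IsSVT n (rowShape s) t) (hn : 1 ≤ n) (hs : 0 < s)
    {a : ℕ} (h : colHas n (Psi s t) a 0) : ∃ c, a ∈ t 0 c := by
  rcases (colHas_Psi_zero ht hn hs).mp h with rfl | h
  · exact ⟨0, minE_mem_box ht hs⟩
  · obtain ⟨c, -, hc, -⟩ := mem_extraEntries.mp h
    exact ⟨c, hc⟩

lemma fRaw_Psi_eq_none (ht : IsSVT n (rowShape s) t) (hn : 1 ≤ n) (hs : 0 < s)
    (h : ∀ c, i ∈ t 0 c → (i + 1) ∈ t 0 c) :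
    fRaw n (hookShape s (excess n (rowShape s) t)) i (Psi s t) = none := by
  have huniq : ∀ a b, i ∈ t 0 a → i ∈ t 0 b → a = b := by
    intro a b ha hb
    by_contra hab
    rcases Nat.lt_or_gt_of_ne hab with hlt | hlt
    · have := le_of_mem_box_of_lt ht hlt (h a ha) hb
      omega
    · have := le_of_mem_box_of_lt ht hlt (h b hb) ha
      omega
  have hcol : ∀ c, i ∈ t 0 c → colHas n (Psi s t) (i + 1) 0 := fun c hc =>
    (colHas_Psi_zero ht hn hs).mpr (Or.inr (mem_extraEntries.mpr ⟨c, lt_of_mem_box ht hc,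
      h c hc, by have := minE_le hc; omega⟩))
  refine fRaw_eq_none_iff.mpr fun c hc => ?_
  rcases Nat.eq_zero_or_pos c with rfl | hc0
  · obtain ⟨hi, hi1⟩ := colSign_eq_some_true_iff.mp ((plusCol_Psi_zero_iff hs).mp hc)
    obtain ⟨c, hc⟩ := exists_mem_box_of_colHas_Psi_zero ht hn hs hi
    exact hi1 (hcol c hc)
  obtain ⟨hcs, hmc, hor⟩ := (plusCol_Psi_iff_of_pos ht hn hc0).mp hc
  have hic : i ∈ t 0 c := hmc ▸ minE_mem_box ht hcs
  rcases hor with hsign | ⟨j, hj, hjc, hmj⟩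
  · refine hsign (colSign_eq_some_false_iff.mpr ⟨hcol c hic, fun hi0 => ?_⟩)
    rcases (colHas_Psi_zero ht hn hs).mp hi0 with hi0 | hiE
    · exact hc0.ne (huniq 0 c (hi0 ▸ minE_mem_box ht hs) hic)
    · obtain ⟨c', -, hic', hne⟩ := mem_extraEntries.mp hiE
      exact hne (huniq c' c hic' hic ▸ hmc.symm)
  · exact hjc.ne (huniq j c (hmj ▸ minE_mem_box ht (hjc.trans hcs)) hic)

lemma eRaw_Psi_eq_none (ht : IsSVT n (rowShape s) t) (hn : 1 ≤ n) (hs : 0 < s)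
    (h : ∀ c, (i + 1) ∈ t 0 c → i ∈ t 0 c) :
    eRaw n (hookShape s (excess n (rowShape s) t)) i (Psi s t) = none := by
  refine eRaw_eq_none_iff.mpr fun c hc => ?_
  rcases Nat.eq_zero_or_pos c with rfl | hc0
  · obtain ⟨hsign, hno⟩ := (minusCol_Psi_zero_iff ht hn hs).mp hc
    obtain ⟨hi1, hi⟩ := colSign_eq_some_false_iff.mp hsign
    obtain ⟨c, hc⟩ := exists_mem_box_of_colHas_Psi_zero ht hn hs hi1
    have hic := h c hc
    have hcs := lt_of_mem_box ht hc
    by_cases hmc : i = minE (t 0 c)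
    · rcases Nat.eq_zero_or_pos c with rfl | hc0
      · exact hi ((colHas_Psi_zero ht hn hs).mpr (Or.inl hmc))
      · exact hno c hc0 hcs hmc.symm
    · exact hi ((colHas_Psi_zero ht hn hs).mpr
        (Or.inr (mem_extraEntries.mpr ⟨c, hcs, hic, hmc⟩)))
  · obtain ⟨hcs, hmc⟩ := (minusCol_Psi_iff_of_pos ht hn hc0).mp hc
    have := minE_le (h c (hmc ▸ minE_mem_box ht hcs))
    omega

end HookOperators

section RowMoves

variable {n s i : ℕ} {t : Filling}

lemma mem_extraEntries_updateBox {c x : ℕ} (A : Finset ℕ) (hc : c < s) :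
    x ∈ extraEntries s (updateBox t 0 c A) ↔ x ∈ A.erase (minE A) ∨
      ∃ c', c' < s ∧ c' ≠ c ∧ x ∈ t 0 c' ∧ x ≠ minE (t 0 c') := by
  simp only [mem_extraEntries, Finset.mem_erase]
  constructor
  · rintro ⟨c', hc', hx, hne⟩
    by_cases h : c' = c
    · subst h
      simp only [updateBox_same] at hx hne
      exact Or.inl ⟨hne, hx⟩
    · rw [updateBox_of_ne _ _ _ _ (by tauto)] at hx hne
      exact Or.inr ⟨c', hc', h, hx, hne⟩
  · rintro (⟨hne, hx⟩ | ⟨c', hc', h, hx, hne⟩)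
    · exact ⟨c, hc, by simpa using hx, by simpa using hne⟩
    · exact ⟨c', hc', by rwa [updateBox_of_ne _ _ _ _ (by tauto)],
        by rwa [updateBox_of_ne _ _ _ _ (by tauto)]⟩

lemma mem_extraEntries_iff_of_lt {c x : ℕ} (hc : c < s) :
    x ∈ extraEntries s t ↔ x ∈ (t 0 c).erase (minE (t 0 c)) ∨
      ∃ c', c' < s ∧ c' ≠ c ∧ x ∈ t 0 c' ∧ x ≠ minE (t 0 c') := by
  conv_lhs => rw [← updateBox_self t 0 c]
  exact mem_extraEntries_updateBox _ hc

lemma Psi_updateBox_of_erase_minE_eq {c : ℕ} {A : Finset ℕ}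
    (hc : c < s) (hA : A.erase (minE A) = (t 0 c).erase (minE (t 0 c))) :
    Psi s (updateBox t 0 c A) = updateBox (Psi s t) 0 c {minE A} := by
  refine Psi_eq_updateBox_zero hc (fun c' _ hc' => by rw [updateBox_of_ne _ _ _ _ (by tauto)])
    (by rw [updateBox_same]) ?_
  ext x
  rw [mem_extraEntries_updateBox _ hc, mem_extraEntries_iff_of_lt hc, hA]

lemma extraEntries_eq_union (t : Filling) {c : ℕ} (hc : c + 1 < s) :
    extraEntries s t =
      ((t 0 c).erase (minE (t 0 c)) ∪ (t 0 (c + 1)).erase (minE (t 0 (c + 1)))) ∪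
      ((Finset.range s).filter fun c' => c' ≠ c ∧ c' ≠ c + 1).biUnion
        fun c' => (t 0 c').erase (minE (t 0 c')) := by
  ext x
  simp only [mem_extraEntries, Finset.mem_union, Finset.mem_biUnion, Finset.mem_filter,
    Finset.mem_range, Finset.mem_erase]
  constructor
  · rintro ⟨c', hc', hx, hne⟩
    by_cases h : c' = c
    · subst h; exact Or.inl (Or.inl ⟨hne, hx⟩)
    by_cases h' : c' = c + 1
    · subst h'; exact Or.inl (Or.inr ⟨hne, hx⟩)
    exact Or.inr ⟨c', ⟨hc', h, h'⟩, hne, hx⟩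
  · rintro ((⟨hne, hx⟩ | ⟨hne, hx⟩) | ⟨c', ⟨hc', -⟩, hne, hx⟩)
    · exact ⟨c, by omega, hx, hne⟩
    · exact ⟨c + 1, hc, hx, hne⟩
    · exact ⟨c', hc', hx, hne⟩

lemma extraEntries_updateBox_pair {c : ℕ} {A B : Finset ℕ} (hc : c + 1 < s)
    (h : A.erase (minE A) ∪ B.erase (minE B) =
      (t 0 c).erase (minE (t 0 c)) ∪ (t 0 (c + 1)).erase (minE (t 0 (c + 1)))) :
    extraEntries s (updateBox (updateBox t 0 c A) 0 (c + 1) B) = extraEntries s t := by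
  rw [extraEntries_eq_union _ hc, extraEntries_eq_union t hc, updateBox_same,
    updateBox_of_ne _ _ _ _ (by omega), updateBox_same, h]
  congr 1
  refine Finset.biUnion_congr rfl fun c' hc' => ?_
  obtain ⟨-, h₁, h₂⟩ := Finset.mem_filter.mp hc'
  rw [updateBox_of_ne _ _ _ _ (by omega), updateBox_of_ne _ _ _ _ (by omega)]

lemma Psi_updateBox_insert_erase_minE {c a : ℕ} (hc : c < s) (ha : a ∉ t 0 c)
    (hlt : ∀ y ∈ t 0 c, y ≠ minE (t 0 c) → a < y) :
    Psi s (updateBox t 0 c (insert a ((t 0 c).erase (minE (t 0 c))))) =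
      updateBox (Psi s t) 0 c {a} := by
  rw [Psi_updateBox_of_erase_minE_eq hc (erase_minE_insert_erase_minE ha hlt),
    minE_insert_erase_minE hlt]

lemma Psi_updateBox_insert_erase (ht : IsSVT n (rowShape s) t) {c x y k : ℕ} (hc : c < s)
    (hx : x ∈ t 0 c) (hxm : minE (t 0 c) < x) (hym : minE (t 0 c) < y)
    (hy : y ∉ extraEntries s t) (hxy : ∀ z ∈ extraEntries s t, z ≠ x → (z < x ↔ z < y))
    (hk : k < (uncrowdRest s t).length) (hkx : (uncrowdRest s t).getD k 0 = x) :
    Psi s (updateBox t 0 c (insert y ((t 0 c).erase x))) = updateBox (Psi s t) (k + 1) 0 {y} := by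
  have hne : (t 0 c).Nonempty := ⟨x, hx⟩
  refine Psi_eq_updateBox_leg (fun c' _ => ?_) hk hkx hy hxy ?_
  · by_cases h : c' = c
    · subst h
      rw [updateBox_same, minE_insert_erase_of_lt hne hxm hym]
    · rw [updateBox_of_ne _ _ _ _ (by tauto)]
  have hrest : ∀ z, (∃ c', c' < s ∧ c' ≠ c ∧ z ∈ t 0 c' ∧ z ≠ minE (t 0 c')) →
      z ≠ x ∧ z ≠ y :=
    fun z ⟨c', hc', hcc, hz, hzm⟩ => ⟨fun h => hcc (eq_of_mem_of_ne_minE ht hz hzm (h ▸ hx)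
      (h ▸ hxm.ne')), fun h => hy (mem_extraEntries.mpr ⟨c', hc', h ▸ hz, h ▸ hzm⟩)⟩
  ext z
  rw [mem_extraEntries_updateBox _ hc, minE_insert_erase_of_lt hne hxm hym]
  simp only [Finset.mem_insert, Finset.mem_erase]
  rw [mem_extraEntries_iff_of_lt hc]
  simp only [Finset.mem_erase]
  have := hrest z
  constructor
  · rintro (⟨hzm, rfl | ⟨hzx, hz⟩⟩ | h)
    · exact Or.inl rfl
    · exact Or.inr ⟨hzx, Or.inl ⟨hzm, hz⟩⟩
    · exact Or.inr ⟨(this h).1, Or.inr h⟩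
  · rintro (rfl | ⟨hzx, ⟨hzm, hz⟩ | h⟩)
    · exact Or.inl ⟨hym.ne', Or.inl rfl⟩
    · exact Or.inl ⟨hzm, Or.inr ⟨hzx, hz⟩⟩
    · exact Or.inr h

lemma Psi_moveRight (ht : IsSVT n (rowShape s) t) {c : ℕ} (hi : i ∈ t 0 c)
    (hi1 : (i + 1) ∉ t 0 c) (hi' : i ∈ t 0 (c + 1)) (hi1' : (i + 1) ∈ t 0 (c + 1)) :
    Psi s (updateBox (updateBox t 0 (c + 1) ((t 0 (c + 1)).erase i)) 0 c
      (insert (i + 1) (t 0 c))) = updateBox (Psi s t) 0 (c + 1) {i + 1} := by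
  have hc : c + 1 < s := lt_of_mem_box ht hi'
  have hmB : minE (t 0 (c + 1)) = i := minE_eq_of_mem_of_lt ht (lt_add_one c) hi hi'
  have hmA : minE (t 0 c) ≤ i := minE_le hi
  have hmA' : minE (insert (i + 1) (t 0 c)) = minE (t 0 c) :=
    minE_eq (Finset.mem_insert_of_mem (minE_mem ⟨i, hi⟩)) fun y hy => by
      rcases Finset.mem_insert.mp hy with rfl | hy
      · omega
      · exact minE_le hy
  have hmB' : minE ((t 0 (c + 1)).erase i) = i + 1 :=
    minE_eq (Finset.mem_erase.mpr ⟨by omega, hi1'⟩) fun y hy => by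
      have := minE_le (Finset.mem_erase.mp hy).2
      have := (Finset.mem_erase.mp hy).1
      omega
  rw [updateBox_comm _ (by omega)]
  refine Psi_eq_updateBox_zero hc (fun c' _ hc' => ?_) (by rw [updateBox_same, hmB'])
    (extraEntries_updateBox_pair hc ?_)
  · by_cases h : c' = c
    · subst h
      rw [updateBox_of_ne _ _ _ _ (by omega), updateBox_same, hmA']
    · rw [updateBox_of_ne _ _ _ _ (by omega), updateBox_of_ne _ _ _ _ (by omega)]
  · rw [hmA', hmB', hmB]
    ext x
    simp only [Finset.mem_union, Finset.mem_erase, Finset.mem_insert]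
    grind

lemma Psi_moveLeft (ht : IsSVT n (rowShape s) t) {c : ℕ} (hi : i ∈ t 0 c)
    (hi1 : (i + 1) ∈ t 0 c) (hi' : i ∉ t 0 (c + 1)) (hi1' : (i + 1) ∈ t 0 (c + 1)) :
    Psi s (updateBox (updateBox t 0 c ((t 0 c).erase (i + 1))) 0 (c + 1)
      (insert i (t 0 (c + 1)))) = updateBox (Psi s t) 0 (c + 1) {i} := by
  have hc : c + 1 < s := lt_of_mem_box ht hi1'
  have hmB : minE (t 0 (c + 1)) = i + 1 := minE_eq_of_mem_of_lt ht (lt_add_one c) hi1 hi1'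
  have hmA : minE (t 0 c) ≤ i := minE_le hi
  have hmA' : minE ((t 0 c).erase (i + 1)) = minE (t 0 c) :=
    minE_eq (Finset.mem_erase.mpr ⟨by omega, minE_mem ⟨i, hi⟩⟩) fun y hy =>
      minE_le (Finset.mem_erase.mp hy).2
  have hmB' : minE (insert i (t 0 (c + 1))) = i :=
    minE_eq (Finset.mem_insert_self _ _) fun y hy => by
      rcases Finset.mem_insert.mp hy with rfl | hy
      · exact le_rfl
      · have := minE_le hy
        omega
  refine Psi_eq_updateBox_zero hc (fun c' _ hc' => ?_) (by rw [updateBox_same, hmB'])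
    (extraEntries_updateBox_pair hc ?_)
  · by_cases h : c' = c
    · subst h
      rw [updateBox_of_ne _ _ _ _ (by omega), updateBox_same, hmA']
    · rw [updateBox_of_ne _ _ _ _ (by omega), updateBox_of_ne _ _ _ _ (by omega)]
  · rw [hmA', hmB', hmB, Finset.erase_insert hi']
    ext x
    simp only [Finset.mem_union, Finset.mem_erase]
    grind

end RowMoves

section FCommute

variable {n s i c : ℕ} {t : Filling}

lemma fRaw_rowShape (ht : IsSVT n (rowShape s) t) (hn : 1 ≤ n) (hfb : fBoxCol n s t i c) :
    fRaw n (rowShape s) i t = some (if i ∈ t 0 (c + 1) then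
      updateBox (updateBox t 0 (c + 1) ((t 0 (c + 1)).erase i)) 0 c (insert (i + 1) (t 0 c))
      else updateBox t 0 c (insert (i + 1) ((t 0 c).erase i))) :=
  fRaw_eq_some hfb hn ((plusCol_row_iff ht).mp hfb.1).1 fun r _ hr => by
    by_contra h
    simp [box_eq_empty_of_ne_zero ht h] at hr

lemma fRaw_Psi_of_mem_next (ht : IsSVT n (rowShape s) t) (hn : 1 ≤ n) (hs : 0 < s)
    (hfb : fBoxCol n s t i c) (hB : i ∈ t 0 (c + 1)) :
    fRaw n (hookShape s (excess n (rowShape s) t)) i (Psi s t) =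
      some (Psi s (updateBox (updateBox t 0 (c + 1) ((t 0 (c + 1)).erase i)) 0 c
        (insert (i + 1) (t 0 c)))) := by
  obtain ⟨hi, hi1⟩ := (plusCol_row_iff ht).mp hfb.1
  have hB1 : (i + 1) ∈ t 0 (c + 1) := by
    by_contra h
    exact absurd (hfb.2 _ ((plusCol_row_iff ht).mpr ⟨hB, h⟩)) (by omega)
  have hd := lt_of_mem_box ht hB
  have hmd : minE (t 0 (c + 1)) = i := minE_eq_of_mem_of_lt ht (lt_add_one c) hi hB
  rw [Psi_moveRight ht hi hi1 hB hB1]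
  refine fRaw_Psi_of_row_zero ht hn hd hmd ?_ fun c' hc' hc's hmc' => ?_
  · refine (plusCol_Psi_iff_of_pos ht hn c.succ_pos).mpr ⟨hd, hmd, ?_⟩
    by_cases h0 : colHas n (Psi s t) i 0
    · exact Or.inl fun h => (colSign_eq_some_false_iff.mp h).2 h0
    · have hiE : i ∉ extraEntries s t := fun h => h0 ((colHas_Psi_zero ht hn hs).mpr (Or.inr h))
      have hmc : minE (t 0 c) = i := by
        by_contra h
        exact hiE (mem_extraEntries.mpr ⟨c, by omega, hi, Ne.symm h⟩)
      have hc0 : 0 < c := Nat.pos_of_ne_zero fun h =>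
        h0 ((colHas_Psi_zero ht hn hs).mpr (Or.inl (h ▸ hmc.symm)))
      exact Or.inr ⟨c, hc0, lt_add_one c, hmc⟩
  · have := le_of_mem_box_of_lt ht hc' hB1 (hmc' ▸ minE_mem_box ht hc's)
    omega

lemma notMem_box_of_lt_of_notMem_next (ht : IsSVT n (rowShape s) t) (hi : i ∈ t 0 c)
    (hB : i ∉ t 0 (c + 1)) {c' : ℕ} (hc' : c < c') : i ∉ t 0 c' :=
  fun h => hB (mem_box_of_le_of_le ht hi h (Nat.le_succ c) hc')

lemma succ_notMem_extraEntries (ht : IsSVT n (rowShape s) t) (hfb : fBoxCol n s t i c)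
    (hB : i ∉ t 0 (c + 1)) : (i + 1) ∉ extraEntries s t := by
  obtain ⟨hi, hi1⟩ := (plusCol_row_iff ht).mp hfb.1
  intro h
  obtain ⟨c', hc', hx, hne⟩ := mem_extraEntries.mp h
  rcases Nat.lt_trichotomy c' c with hlt | rfl | hlt
  · have := le_of_mem_box_of_lt ht hlt hx hi
    omega
  · exact hi1 hx
  · have := le_of_mem_box_of_lt ht hlt hi (minE_mem_box ht hc')
    have := (minE_le hx).lt_of_ne hne.symm
    exact notMem_box_of_lt_of_notMem_next ht hi hB hlt
      ((show minE (t 0 c') = i by omega) ▸ minE_mem_box ht hc')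

lemma fRaw_Psi_of_minE_eq (ht : IsSVT n (rowShape s) t) (hn : 1 ≤ n) (hs : 0 < s)
    (hfb : fBoxCol n s t i c) (hB : i ∉ t 0 (c + 1)) (hmc : minE (t 0 c) = i) :
    fRaw n (hookShape s (excess n (rowShape s) t)) i (Psi s t) =
      some (Psi s (updateBox t 0 c (insert (i + 1) ((t 0 c).erase i)))) := by
  obtain ⟨hi, hi1⟩ := (plusCol_row_iff ht).mp hfb.1
  have hc := lt_of_mem_box ht hi
  have hi1col : ¬ colHas n (Psi s t) (i + 1) 0 := by
    rw [colHas_Psi_zero ht hn hs]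
    rintro (h | h)
    · have := minE_box_mono ht (Nat.zero_le c) hc
      omega
    · exact succ_notMem_extraEntries ht hfb hB h
  have hplus : PlusCol n s (Psi s t) i c := by
    rcases Nat.eq_zero_or_pos c with rfl | hc0
    · exact (plusCol_Psi_zero_iff hs).mpr (colSign_eq_some_true_iff.mpr
        ⟨(colHas_Psi_zero ht hn hs).mpr (Or.inl hmc.symm), hi1col⟩)
    · exact (plusCol_Psi_iff_of_pos ht hn hc0).mpr
        ⟨hc, hmc, Or.inl fun h => hi1col (colSign_eq_some_false_iff.mp h).1⟩
  have hlt : ∀ y ∈ t 0 c, y ≠ minE (t 0 c) → i + 1 < y := fun y hy hne => by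
    have := minE_le hy
    have : y ≠ i + 1 := fun h => hi1 (h ▸ hy)
    omega
  rw [show (t 0 c).erase i = (t 0 c).erase (minE (t 0 c)) by rw [hmc],
    Psi_updateBox_insert_erase_minE hc hi1 hlt]
  exact fRaw_Psi_of_row_zero ht hn hc hmc hplus fun c' hc' hc's hmc' =>
    notMem_box_of_lt_of_notMem_next ht hi hB hc' (hmc' ▸ minE_mem_box ht hc's)

lemma fRaw_Psi_of_minE_ne (ht : IsSVT n (rowShape s) t) (hn : 1 ≤ n) (hs : 0 < s)
    (hfb : fBoxCol n s t i c) (hB : i ∉ t 0 (c + 1)) (hmc : minE (t 0 c) ≠ i) :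
    fRaw n (hookShape s (excess n (rowShape s) t)) i (Psi s t) =
      some (Psi s (updateBox t 0 c (insert (i + 1) ((t 0 c).erase i)))) := by
  obtain ⟨hi, -⟩ := (plusCol_row_iff ht).mp hfb.1
  have hc := lt_of_mem_box ht hi
  have hmlt : minE (t 0 c) < i := (minE_le hi).lt_of_ne hmc
  have hiE : i ∈ extraEntries s t := mem_extraEntries.mpr ⟨c, hc, hi, hmc.symm⟩
  have hi1E := succ_notMem_extraEntries ht hfb hB
  obtain ⟨k, hk, hki⟩ := exists_getD_uncrowdRest_eq hiE
  rw [Psi_updateBox_insert_erase ht hc hi hmlt (by omega) hi1E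
    (fun z hz hzi => by have : z ≠ i + 1 := fun h => hi1E (h ▸ hz); omega) hk hki]
  refine fRaw_Psi_of_leg ht hn hs hk hki (colSign_eq_some_true_iff.mpr ⟨?_, ?_⟩) ?_
  · exact (colHas_Psi_zero ht hn hs).mpr (Or.inr hiE)
  · rw [colHas_Psi_zero ht hn hs]
    rintro (h | h)
    · have := minE_box_mono ht (Nat.zero_le c) hc
      omega
    · exact hi1E h
  · intro c' _ hc's hmc'
    have hic' : i ∈ t 0 c' := hmc' ▸ minE_mem_box ht hc's
    rcases Nat.lt_trichotomy c' c with hlt | rfl | hlt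
    · have := le_of_mem_box_of_lt ht hlt hic' (minE_mem_box ht hc)
      omega
    · exact hmc hmc'
    · exact notMem_box_of_lt_of_notMem_next ht hi hB hlt hic'

theorem fRaw_Psi (ht : IsSVT n (rowShape s) t) (hn : 1 ≤ n) (hs : 0 < s) (i : ℕ) :
    fRaw n (hookShape s (excess n (rowShape s) t)) i (Psi s t) =
      (fRaw n (rowShape s) i t).map (Psi s) := by
  by_cases hP : ∃ c, PlusCol n s t i c
  · obtain ⟨c, hfb⟩ := exists_fBoxCol hP
    rw [fRaw_rowShape ht hn hfb, Option.map_some]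
    split_ifs with hB
    · exact fRaw_Psi_of_mem_next ht hn hs hfb hB
    · by_cases hmc : minE (t 0 c) = i
      · exact fRaw_Psi_of_minE_eq ht hn hs hfb hB hmc
      · exact fRaw_Psi_of_minE_ne ht hn hs hfb hB hmc
  · rw [not_exists] at hP
    rw [(fRaw_eq_none_iff (u := t)).mpr hP, Option.map_none]
    refine fRaw_Psi_eq_none ht hn hs fun c hi => ?_
    by_contra hi1
    exact hP c ((plusCol_row_iff ht).mpr ⟨hi, hi1⟩)

end FCommute

section ECommute

variable {n s i c : ℕ} {t : Filling}

lemma eRaw_rowShape (ht : IsSVT n (rowShape s) t) (hn : 1 ≤ n) (heb : eBoxCol n s t i c) :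
    eRaw n (rowShape s) i t = some (if 0 < c ∧ (i + 1) ∈ t 0 (c - 1) then
      updateBox (updateBox t 0 (c - 1) ((t 0 (c - 1)).erase (i + 1))) 0 c (insert i (t 0 c))
      else updateBox t 0 c (insert i ((t 0 c).erase (i + 1)))) :=
  eRaw_eq_some heb hn ((minusCol_row_iff ht).mp heb.1).1 fun r _ hr => by
    by_contra h
    simp [box_eq_empty_of_ne_zero ht h] at hr

lemma mem_of_succ_mem_of_lt (ht : IsSVT n (rowShape s) t) (heb : eBoxCol n s t i c) {c' : ℕ}
    (hc' : c' < c) (h : (i + 1) ∈ t 0 c') : i ∈ t 0 c' := by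
  by_contra hi
  exact absurd (heb.2 c' ((minusCol_row_iff ht).mpr ⟨h, hi⟩)) (by omega)

lemma eRaw_Psi_of_mem_prev (ht : IsSVT n (rowShape s) t) (hn : 1 ≤ n) (hs : 0 < s)
    (heb : eBoxCol n s t i c) (hL : 0 < c ∧ (i + 1) ∈ t 0 (c - 1)) :
    eRaw n (hookShape s (excess n (rowShape s) t)) i (Psi s t) =
      some (Psi s (updateBox (updateBox t 0 (c - 1) ((t 0 (c - 1)).erase (i + 1))) 0 c
        (insert i (t 0 c)))) := by
  obtain ⟨hi1', hi'⟩ := (minusCol_row_iff ht).mp heb.1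
  obtain ⟨c, rfl⟩ : ∃ c', c = c' + 1 := ⟨c - 1, by omega⟩
  rw [Nat.add_sub_cancel] at hL ⊢
  have hi := mem_of_succ_mem_of_lt ht heb (lt_add_one c) hL.2
  have hd := lt_of_mem_box ht hi1'
  have hmc : minE (t 0 c) ≤ i := minE_le hi
  rw [Psi_moveLeft ht hi hL.2 hi' hi1']
  refine eRaw_Psi_of_row_zero ht hn hs hd (minE_eq_of_mem_of_lt ht (lt_add_one c) hL.2 hi1')
    (fun c' hc' => ?_) fun _ hminus => ?_
  · have := minE_box_mono ht (show c' ≤ c by omega) (by omega)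
    omega
  · obtain ⟨hsign, hno⟩ := (minusCol_Psi_zero_iff ht hn hs).mp hminus
    have hi0 := (colSign_eq_some_false_iff.mp hsign).2
    rw [colHas_Psi_zero ht hn hs] at hi0
    have hmci : minE (t 0 c) = i := by
      by_contra h
      exact hi0 (Or.inr (mem_extraEntries.mpr ⟨c, by omega, hi, Ne.symm h⟩))
    rcases Nat.eq_zero_or_pos c with rfl | hc0
    · exact hi0 (Or.inl hmci.symm)
    · exact hno c hc0 (by omega) hmci

lemma succ_notMem_box_of_lt (ht : IsSVT n (rowShape s) t) (hi1 : (i + 1) ∈ t 0 c)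
    (hL : ¬ (0 < c ∧ (i + 1) ∈ t 0 (c - 1))) {c' : ℕ} (hc' : c' < c) : (i + 1) ∉ t 0 c' :=
  fun h => hL ⟨by omega, mem_box_of_le_of_le ht h hi1 (by omega) (by omega)⟩

lemma eRaw_Psi_of_minE_eq (ht : IsSVT n (rowShape s) t) (hn : 1 ≤ n) (hs : 0 < s)
    (heb : eBoxCol n s t i c) (hL : ¬ (0 < c ∧ (i + 1) ∈ t 0 (c - 1)))
    (hmc : minE (t 0 c) = i + 1) :
    eRaw n (hookShape s (excess n (rowShape s) t)) i (Psi s t) =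
      some (Psi s (updateBox t 0 c (insert i ((t 0 c).erase (i + 1))))) := by
  obtain ⟨hi1, hi⟩ := (minusCol_row_iff ht).mp heb.1
  have hc := lt_of_mem_box ht hi1
  have hleft : ∀ c', c' < c → (i + 1) ∉ t 0 c' := fun _ => succ_notMem_box_of_lt ht hi1 hL
  have hlt : ∀ y ∈ t 0 c, y ≠ minE (t 0 c) → i < y := fun y hy _ => by
    have := minE_le hy
    omega
  rw [show (t 0 c).erase (i + 1) = (t 0 c).erase (minE (t 0 c)) by rw [hmc],
    Psi_updateBox_insert_erase_minE hc hi hlt]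
  refine eRaw_Psi_of_row_zero ht hn hs hc hmc
    (fun c' hc' hmc' => hleft c' hc' (hmc' ▸ minE_mem_box ht (by omega))) fun hc0 hminus => ?_
  obtain ⟨hsign, -⟩ := (minusCol_Psi_zero_iff ht hn hs).mp hminus
  rcases (colHas_Psi_zero ht hn hs).mp (colSign_eq_some_false_iff.mp hsign).1 with h | h
  · exact hleft 0 hc0 (h ▸ minE_mem_box ht hs)
  · obtain ⟨c', hc', hx, hne⟩ := mem_extraEntries.mp h
    rcases Nat.lt_trichotomy c' c with hlt' | rfl | hlt'
    · exact hleft c' hlt' hx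
    · exact hne hmc.symm
    · have := minE_box_mono ht hlt'.le hc'
      have := (minE_le hx).lt_of_ne hne.symm
      omega

lemma eRaw_Psi_of_minE_ne (ht : IsSVT n (rowShape s) t) (hn : 1 ≤ n) (hs : 0 < s)
    (heb : eBoxCol n s t i c) (hmc : minE (t 0 c) ≠ i + 1) :
    eRaw n (hookShape s (excess n (rowShape s) t)) i (Psi s t) =
      some (Psi s (updateBox t 0 c (insert i ((t 0 c).erase (i + 1))))) := by
  obtain ⟨hi1, hi⟩ := (minusCol_row_iff ht).mp heb.1
  have hc := lt_of_mem_box ht hi1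
  have hmlt : minE (t 0 c) < i := by
    have := minE_le hi1
    have : minE (t 0 c) ≠ i := fun h => hi (h ▸ minE_mem_box ht hc)
    omega
  have hnoi : ∀ c', i ∉ t 0 c' := by
    intro c' hic'
    rcases Nat.lt_trichotomy c' c with hlt | rfl | hlt
    · have := le_of_mem_box_of_lt ht hlt hic' (minE_mem_box ht hc)
      omega
    · exact hi hic'
    · have := le_of_mem_box_of_lt ht hlt hi1 hic'
      omega
  have hi1E : (i + 1) ∈ extraEntries s t := mem_extraEntries.mpr ⟨c, hc, hi1, hmc.symm⟩
  have hiE : i ∉ extraEntries s t := fun h => by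
    obtain ⟨c', -, hic', -⟩ := mem_extraEntries.mp h
    exact hnoi c' hic'
  obtain ⟨k, hk, hki⟩ := exists_getD_uncrowdRest_eq hi1E
  rw [Psi_updateBox_insert_erase ht hc hi1 (by omega) hmlt hiE
    (fun z hz hzi => by have : z ≠ i := fun h => hiE (h ▸ hz); omega) hk hki]
  refine eRaw_Psi_of_leg ht hn hk hki ((minusCol_Psi_zero_iff ht hn hs).mpr
    ⟨colSign_eq_some_false_iff.mpr ⟨(colHas_Psi_zero ht hn hs).mpr (Or.inr hi1E), ?_⟩,
      fun c' _ hc's hmc' => hnoi c' (hmc' ▸ minE_mem_box ht hc's)⟩)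
  rw [colHas_Psi_zero ht hn hs]
  rintro (h | h)
  · exact hnoi 0 (h ▸ minE_mem_box ht hs)
  · exact hiE h

theorem eRaw_Psi (ht : IsSVT n (rowShape s) t) (hn : 1 ≤ n) (hs : 0 < s) (i : ℕ) :
    eRaw n (hookShape s (excess n (rowShape s) t)) i (Psi s t) =
      (eRaw n (rowShape s) i t).map (Psi s) := by
  by_cases hM : ∃ c, MinusCol n s t i c
  · obtain ⟨c, heb⟩ := exists_eBoxCol hM
    rw [eRaw_rowShape ht hn heb, Option.map_some]
    split_ifs with hL
    · exact eRaw_Psi_of_mem_prev ht hn hs heb hL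
    · by_cases hmc : minE (t 0 c) = i + 1
      · exact eRaw_Psi_of_minE_eq ht hn hs heb hL hmc
      · exact eRaw_Psi_of_minE_ne ht hn hs heb hmc
  · rw [not_exists] at hM
    rw [(eRaw_eq_none_iff (u := t)).mpr hM, Option.map_none]
    refine eRaw_Psi_eq_none ht hn hs fun c hi1 => ?_
    by_contra hi
    exact hM c ((minusCol_row_iff ht).mpr ⟨hi1, hi⟩)

end ECommute

/-- the uncrowding map `Ψ` is a weight-preserving bijection from
`SVT^n((s))` onto `⨆_{e ≥ 0} SSYT^n((s,1^e))` commuting with all crystal operators. -/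
theorem uncrowding_single_row (n s : ℕ) (hs : 1 ≤ s) (hn : 1 ≤ n) :
    (∀ t, IsSVT n (rowShape s) t →
      IsSSYT n (hookShape s (excess n (rowShape s) t)) (Psi s t)) ∧
    (∀ t t', IsSVT n (rowShape s) t → IsSVT n (rowShape s) t' →
      Psi s t = Psi s t' → t = t') ∧
    (∀ e u, IsSSYT n (hookShape s e) u →
      ∃ t, IsSVT n (rowShape s) t ∧ excess n (rowShape s) t = e ∧ Psi s t = u) ∧
    (∀ t, IsSVT n (rowShape s) t →
      ∀ j, wt n (hookShape s (excess n (rowShape s) t)) (Psi s t) j =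
        wt n (rowShape s) t j) ∧
    (∀ t, IsSVT n (rowShape s) t → ∀ i, 1 ≤ i → i < n →
      (eRaw n (rowShape s) i t = none ↔
        eRaw n (hookShape s (excess n (rowShape s) t)) i (Psi s t) = none) ∧
      (∀ t', eRaw n (rowShape s) i t = some t' →
        eRaw n (hookShape s (excess n (rowShape s) t)) i (Psi s t) = some (Psi s t')) ∧
      (fRaw n (rowShape s) i t = none ↔
        fRaw n (hookShape s (excess n (rowShape s) t)) i (Psi s t) = none) ∧
      (∀ t', fRaw n (rowShape s) i t = some t' →
        fRaw n (hookShape s (excess n (rowShape s) t)) i (Psi s t) = some (Psi s t'))) := by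
  refine ⟨fun t ht => isSSYT_Psi ht hn, fun t t' ht ht' h => Psi_injective ht ht' h,
    fun e u hu => Psi_surjective hu hn hs, fun t ht j => ?_, fun t ht i _ _ => ?_⟩
  · rw [wt_Psi ht hn hs, wt_rowShape ht hn]
  · rw [eRaw_Psi ht hn hs, fRaw_Psi ht hn hs]
    exact ⟨Option.map_eq_none_iff.symm, fun t' h => by rw [h, Option.map_some],
      Option.map_eq_none_iff.symm, fun t' h => by rw [h, Option.map_some]⟩

end SVTCrystal

end
end

section
/- Let λ be a partition with at most n parts. Then, as polynomials in ℤ[β][x_1,…,x_n], 𝔊_λ(x_1,…,x_n;β) = Σ_{(Λ,M)} β^{|M|} Π_{j=1}^n x_j^{|λ^{(j)}| − |λ^{(j−1)}| + |M^{(j)}|}, where the sum runs over all pairs (Λ, M) of a Gelfand–Tsetlin pattern Λ = (λ^{(0)},…,λ^{(n)}) with top row λ and a marking M of Λ, and M^{(j)} = {i : (i,j) ∈ M}. -/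
open scoped Classical

noncomputable section

namespace SVTCrystal

/-- A Gelfand–Tsetlin pattern with top row `λ`: a chain `∅ = λ⁽⁰⁾ ⊆ λ⁽¹⁾ ⊆ ⋯ ⊆ λ⁽ⁿ⁾ = λ`
of partitions with each `λ⁽ʲ⁾/λ⁽ʲ⁻¹⁾` a horizontal strip.  Here `L j r` is the part
`λ⁽ʲ⁾_{r+1}` (0-indexed part `r`), normalized by `L j = 0` for `j > n`. -/
def IsGT (n : ℕ) (lam : ℕ → ℕ) (L : ℕ → ℕ → ℕ) : Prop :=
  (∀ r, L 0 r = 0) ∧ (∀ r, L n r = lam r) ∧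
  (∀ j r, j ≤ n → L j (r + 1) ≤ L j r) ∧
  (∀ j r, j < n → L j r ≤ L (j + 1) r) ∧
  (∀ j r, j < n → L (j + 1) (r + 1) ≤ L j r) ∧
  (∀ j r, n < j → L j r = 0)

/-- The entry `(i,j)` (row `j` of the pattern, part index `i ≥ 1`) is markable:
`λ⁽ʲ⁾_{i+1} < λ⁽ʲ⁻¹⁾_i`. -/
def Markable (n : ℕ) (L : ℕ → ℕ → ℕ) (p : ℕ × ℕ) : Prop :=
  1 ≤ p.1 ∧ 2 ≤ p.2 ∧ p.2 ≤ n ∧ L p.2 p.1 < L (p.2 - 1) (p.1 - 1)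

/-- A marking of a GT pattern: a set of markable entries. -/
def IsMarking (n : ℕ) (L : ℕ → ℕ → ℕ) (M : Finset (ℕ × ℕ)) : Prop :=
  ∀ p ∈ M, Markable n L p

/-- `|λ⁽ʲ⁾|`, the size of the `j`-th partition of the pattern. -/
def gtSize (n : ℕ) (L : ℕ → ℕ → ℕ) (j : ℕ) : ℕ := ∑ r ∈ Finset.range n, L j r

/-! ### Auxiliary development for the marked GT pattern formula -/

section MarkedGT

lemma nat_le_of_lt_imp {x y : ℕ} (h : ∀ c, c < x → c < y) : x ≤ y := by
  by_contra hxy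
  push_neg at hxy
  exact absurd (h y hxy) (lt_irrefl y)

lemma mem_iff_lt_card_of_downclosed (S : Finset ℕ) (h : ∀ c, c + 1 ∈ S → c ∈ S) (c : ℕ) :
    c ∈ S ↔ c < S.card := by
  have hdc : ∀ c, c ∈ S → ∀ b, b ≤ c → b ∈ S := by
    intro c
    induction c with
    | zero => intro hc b hb; have hb0 : b = 0 := Nat.le_zero.mp hb; exact hb0 ▸ hc
    | succ k ih =>
      intro hc b hb
      rcases eq_or_lt_of_le hb with h' | h'
      · exact h' ▸ hc
      · exact ih (h k hc) b (Nat.lt_succ_iff.mp h')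
  have hsub : S ⊆ Finset.range S.card := by
    intro c hc
    rw [Finset.mem_range]
    by_contra hle
    push_neg at hle
    have hsub2 : Finset.range (c + 1) ⊆ S := fun b hb =>
      hdc c hc b (Nat.lt_succ_iff.mp (Finset.mem_range.mp hb))
    have := Finset.card_le_card hsub2
    rw [Finset.card_range] at this
    omega
  have heq : S = Finset.range S.card :=
    Finset.eq_of_subset_of_card_le hsub (by rw [Finset.card_range])
  constructor
  · intro hc; exact Finset.mem_range.mp (hsub hc)
  · intro hc
    have : c ∈ Finset.range S.card := Finset.mem_range.mpr hc
    rwa [← heq] at this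

/-- The GT pattern extracted from a tableau: `Lof n lam t j r` is the number of boxes in
row `r` all of whose minimal entry is at most `j`. -/
def Lof (n : ℕ) (lam : ℕ → ℕ) (t : Filling) (j r : ℕ) : ℕ :=
  if j ≤ n then ((Finset.range (lam r)).filter (fun c => ∃ a ∈ t r c, a ≤ j)).card else 0

/-- The marking extracted from a tableau: pairs `(i, j)` such that `j` occurs as a
non-minimal entry of a box in row `i - 1`. -/
def Mof (n : ℕ) (lam : ℕ → ℕ) (t : Filling) : Finset (ℕ × ℕ) :=
  (Finset.Icc 1 n ×ˢ Finset.Icc 2 n).filter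
    (fun p => ∃ c, c < lam (p.1 - 1) ∧ p.2 ∈ t (p.1 - 1) c ∧ ∃ a ∈ t (p.1 - 1) c, a < p.2)

/-- The tableau built from a GT pattern with a marking. -/
def Phi (n : ℕ) (L : ℕ → ℕ → ℕ) (M : Finset (ℕ × ℕ)) : Filling := fun r c =>
  (Finset.Icc 1 n).filter
    (fun j => (L (j - 1) r ≤ c ∧ c < L j r) ∨ ((r + 1, j) ∈ M ∧ c + 1 = L (j - 1) r))

variable {n : ℕ} {lam : ℕ → ℕ} {L : ℕ → ℕ → ℕ} {M : Finset (ℕ × ℕ)} {t : Filling}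

lemma lam_le_lam0 (hlam : IsPartitionShape n lam) (r : ℕ) : lam r ≤ lam 0 := by
  induction r with
  | zero => exact le_rfl
  | succ k ih => exact le_trans (hlam.1 k) ih

lemma gtL_mono (hL : IsGT n lam L) : ∀ j', j' ≤ n → ∀ j, j ≤ j' → ∀ r, L j r ≤ L j' r := by
  intro j'
  induction j' with
  | zero =>
    intro _ j hj r
    have : j = 0 := Nat.le_zero.mp hj
    rw [this]
  | succ k ih =>
    intro hk j hj r
    rcases eq_or_lt_of_le hj with h | h
    · rw [h]
    · exact le_trans (ih (by omega) j (by omega) r) (hL.2.2.2.1 k r (by omega))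

lemma gtL_le_lam (hL : IsGT n lam L) (j r : ℕ) : L j r ≤ lam r := by
  rcases le_or_gt j n with h | h
  · calc L j r ≤ L n r := gtL_mono hL n le_rfl j h r
      _ = lam r := hL.2.1 r
  · rw [hL.2.2.2.2.2 j r h]
    exact Nat.zero_le _

lemma mem_Phi_iff {a r c : ℕ} :
    a ∈ Phi n L M r c ↔ (1 ≤ a ∧ a ≤ n) ∧
      ((L (a - 1) r ≤ c ∧ c < L a r) ∨ ((r + 1, a) ∈ M ∧ c + 1 = L (a - 1) r)) := by
  simp [Phi, Finset.mem_filter, Finset.mem_Icc]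

lemma mem_Phi_lt (hL : IsGT n lam L) {a r c : ℕ} (ha : a ∈ Phi n L M r c) : c < L a r := by
  rw [mem_Phi_iff] at ha
  obtain ⟨⟨h1, h2⟩, h | h⟩ := ha
  · exact h.2
  · have : L (a - 1) r ≤ L a r := gtL_mono hL a h2 (a - 1) (by omega) r
    omega

lemma mem_Phi_le {a r c : ℕ} (ha : a ∈ Phi n L M r c) : L (a - 1) r ≤ c + 1 := by
  rw [mem_Phi_iff] at ha
  obtain ⟨_, h | h⟩ := ha
  · omega
  · omega

lemma mem_Phi_next (hL : IsGT n lam L) (hM : IsMarking n L M) {a r c : ℕ}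
    (ha : a ∈ Phi n L M r c) : L a (r + 1) ≤ c := by
  rw [mem_Phi_iff] at ha
  obtain ⟨⟨h1, h2⟩, h | h⟩ := ha
  · have hs := hL.2.2.2.2.1 (a - 1) r (by omega)
    have ha1 : a - 1 + 1 = a := by omega
    rw [ha1] at hs
    omega
  · obtain ⟨_, _, _, hlt⟩ := hM _ h.1
    simp only [Nat.add_sub_cancel] at hlt
    omega

lemma mem_Phi_lam (hL : IsGT n lam L) {a r c : ℕ} (ha : a ∈ Phi n L M r c) : c < lam r :=
  lt_of_lt_of_le (mem_Phi_lt hL ha) (gtL_le_lam hL a r)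

lemma exists_min_clause (hL : IsGT n lam L) {r c : ℕ} (hc : c < lam r) :
    ∃ m, 1 ≤ m ∧ m ≤ n ∧ L (m - 1) r ≤ c ∧ c < L m r ∧ ∀ k, c < L k r → m ≤ k := by
  have hne : ∃ j, c < L j r := ⟨n, by rw [hL.2.1]; exact hc⟩
  have hm1 : 1 ≤ Nat.find hne := by
    rcases Nat.eq_zero_or_pos (Nat.find hne) with h | h
    · exfalso
      have hs := Nat.find_spec hne
      rw [h, hL.1] at hs
      omega
    · exact h
  refine ⟨Nat.find hne, hm1, Nat.find_min' hne (by rw [hL.2.1]; exact hc), ?_,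
    Nat.find_spec hne, fun k hk => Nat.find_min' hne hk⟩
  by_contra hlt
  push_neg at hlt
  exact absurd hlt (Nat.find_min hne (by omega))

lemma min_clause_unique (hL : IsGT n lam L) {r c j j' : ℕ} (hj : 1 ≤ j) (hjn : j ≤ n)
    (hj' : 1 ≤ j') (hj'n : j' ≤ n) (h1 : L (j - 1) r ≤ c) (h2 : c < L j r)
    (h3 : L (j' - 1) r ≤ c) (h4 : c < L j' r) : j = j' := by
  rcases lt_trichotomy j j' with h | h | h
  · have : L j r ≤ L (j' - 1) r := gtL_mono hL (j' - 1) (by omega) j (by omega) r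
    omega
  · exact h
  · have : L j' r ≤ L (j - 1) r := gtL_mono hL (j - 1) (by omega) j' (by omega) r
    omega

lemma isSVT_Phi (hlam : IsPartitionShape n lam) (hL : IsGT n lam L) (hM : IsMarking n L M) :
    IsSVT n lam (Phi n L M) where
  boxNonempty r c hc := by
    obtain ⟨m, hm1, hmn, hml, hmr, _⟩ := exists_min_clause hL hc
    exact ⟨m, mem_Phi_iff.mpr ⟨⟨hm1, hmn⟩, Or.inl ⟨hml, hmr⟩⟩⟩
  emptyOutside r c hc := by
    rw [Finset.eq_empty_iff_forall_notMem]
    intro a ha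
    exact hc (mem_Phi_lam hL ha)
  entryBounds r c a ha := (mem_Phi_iff.mp ha).1
  rowWeak r c a b ha hb := by
    by_contra hab
    push_neg at hab
    have h1 : L (a - 1) r ≤ c + 1 := mem_Phi_le ha
    have h2 : c + 1 < L b r := mem_Phi_lt hL hb
    have hbnds := (mem_Phi_iff.mp ha).1
    have : L b r ≤ L (a - 1) r := gtL_mono hL (a - 1) (by omega) b (by omega) r
    omega
  colStrict r c a b ha hb := by
    by_contra hab
    push_neg at hab
    have h1 : L a (r + 1) ≤ c := mem_Phi_next hL hM ha
    have h2 : c < L b (r + 1) := mem_Phi_lt hL hb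
    have hbnds := (mem_Phi_iff.mp ha).1
    have : L b (r + 1) ≤ L a (r + 1) := gtL_mono hL a hbnds.2 b hab (r + 1)
    omega

lemma Phi_empty (hL : IsGT n lam L) {r c : ℕ} (hc : ¬ c < lam r) : Phi n L M r c = ∅ := by
  rw [Finset.eq_empty_iff_forall_notMem]
  intro a ha
  exact hc (mem_Phi_lam hL ha)

lemma Phi_eq_insert (hL : IsGT n lam L) {r c : ℕ} (hc : c < lam r) :
    ∃ m, Phi n L M r c =
        insert m ((Finset.Icc 1 n).filter fun j => (r + 1, j) ∈ M ∧ c + 1 = L (j - 1) r) ∧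
      m ∉ (Finset.Icc 1 n).filter fun j => (r + 1, j) ∈ M ∧ c + 1 = L (j - 1) r := by
  obtain ⟨m, hm1, hmn, hml, hmr, hmin⟩ := exists_min_clause hL hc
  refine ⟨m, ?_, ?_⟩
  · ext a
    simp only [mem_Phi_iff, Finset.mem_insert, Finset.mem_filter, Finset.mem_Icc]
    constructor
    · rintro ⟨⟨ha1, han⟩, hcl | hcl⟩
      · exact Or.inl (min_clause_unique hL ha1 han hm1 hmn hcl.1 hcl.2 hml hmr)
      · exact Or.inr ⟨⟨ha1, han⟩, hcl⟩
    · rintro (rfl | ⟨hb, hcl⟩)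
      · exact ⟨⟨hm1, hmn⟩, Or.inl ⟨hml, hmr⟩⟩
      · exact ⟨hb, Or.inr hcl⟩
  · simp only [Finset.mem_filter, Finset.mem_Icc]
    rintro ⟨_, _, heq⟩
    omega

lemma Phi_card (hL : IsGT n lam L) {r c : ℕ} (hc : c < lam r) :
    (Phi n L M r c).card =
      ((Finset.Icc 1 n).filter fun j => (r + 1, j) ∈ M ∧ c + 1 = L (j - 1) r).card + 1 := by
  obtain ⟨m, heq, hnot⟩ := Phi_eq_insert (M := M) hL hc
  rw [heq, Finset.card_insert_of_notMem hnot]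

lemma markset_empty (hL : IsGT n lam L) {r c : ℕ} (hc : ¬ c < lam r) :
    ((Finset.Icc 1 n).filter fun j => (r + 1, j) ∈ M ∧ c + 1 = L (j - 1) r) = ∅ := by
  rw [Finset.eq_empty_iff_forall_notMem]
  intro j hj
  simp only [Finset.mem_filter, Finset.mem_Icc] at hj
  have := gtL_le_lam hL (j - 1) r
  omega

lemma excess_Phi (hlam : IsPartitionShape n lam) (hL : IsGT n lam L) (hM : IsMarking n L M) :
    excess n lam (Phi n L M) = M.card := by
  have hbox : ∀ p : ℕ × ℕ, (Phi n L M p.1 p.2).card - 1 =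
      ((Finset.Icc 1 n).filter fun j => (p.1 + 1, j) ∈ M ∧ p.2 + 1 = L (j - 1) p.1).card := by
    intro p
    by_cases hc : p.2 < lam p.1
    · rw [Phi_card hL hc]
      omega
    · rw [Phi_empty hL hc, markset_empty hL hc]
      simp
  rw [excess]
  rw [Finset.sum_congr rfl (fun p _ => hbox p)]
  have hstep : ∀ p : ℕ × ℕ,
      ((Finset.Icc 1 n).filter fun j => (p.1 + 1, j) ∈ M ∧ p.2 + 1 = L (j - 1) p.1).card =
      ∑ j ∈ Finset.Icc 1 n, if (p.1 + 1, j) ∈ M ∧ p.2 + 1 = L (j - 1) p.1 then 1 else 0 :=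
    fun p => Finset.card_filter _ _
  rw [Finset.sum_congr rfl (fun p _ => hstep p)]
  rw [← Finset.sum_product']
  have hcard : (((Finset.range n ×ˢ Finset.range (lam 0)) ×ˢ Finset.Icc 1 n).filter
      (fun q => (q.1.1 + 1, q.2) ∈ M ∧ q.1.2 + 1 = L (q.2 - 1) q.1.1)).card = M.card := by
    apply Finset.card_bij (fun q _ => ((q.1.1 + 1 : ℕ), q.2))
    · intro q hq
      simp only [Finset.mem_filter] at hq
      exact hq.2.1
    · intro q hq q' hq' heq
      obtain ⟨⟨r, c⟩, j⟩ := q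
      obtain ⟨⟨r', c'⟩, j'⟩ := q'
      simp only [Finset.mem_filter, Finset.mem_product, Finset.mem_range, Finset.mem_Icc] at hq hq'
      simp only [Prod.mk.injEq] at heq ⊢
      obtain ⟨h1, h2⟩ := heq
      have hr : r = r' := by omega
      have hj : j = j' := h2
      subst hr hj
      refine ⟨⟨rfl, ?_⟩, rfl⟩
      have e1 := hq.2.2
      have e2 := hq'.2.2
      omega
    · intro b hb
      obtain ⟨hi1, hj2, hjn, hlt⟩ := hM b hb
      have hpos : 1 ≤ L (b.2 - 1) (b.1 - 1) := by omega
      have hrn : b.1 - 1 < n := by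
        by_contra hr
        push_neg at hr
        have h1 := gtL_le_lam hL (b.2 - 1) (b.1 - 1)
        rw [hlam.2 _ hr] at h1
        omega
      have hc0 : L (b.2 - 1) (b.1 - 1) - 1 < lam 0 := by
        have h1 := gtL_le_lam hL (b.2 - 1) (b.1 - 1)
        have h2 := lam_le_lam0 hlam (b.1 - 1)
        omega
      refine ⟨((b.1 - 1, L (b.2 - 1) (b.1 - 1) - 1), b.2), ?_, ?_⟩
      · simp only [Finset.mem_filter, Finset.mem_product, Finset.mem_range, Finset.mem_Icc]
        have hb1 : b.1 - 1 + 1 = b.1 := by omega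
        refine ⟨⟨⟨hrn, hc0⟩, by omega, hjn⟩, ?_, by omega⟩
        rw [hb1, Prod.mk.eta]
        exact hb
      · simp only
        rw [show b.1 - 1 + 1 = b.1 by omega, Prod.mk.eta]
  rw [← Finset.card_filter]
  exact hcard


lemma wt_Phi (hlam : IsPartitionShape n lam) (hL : IsGT n lam L) (hM : IsMarking n L M)
    {j : ℕ} (hj1 : 1 ≤ j) (hjn : j ≤ n) :
    wt n lam (Phi n L M) j =
      gtSize n L j - gtSize n L (j - 1) + (M.filter fun q => q.2 = j).card := by
  rw [wt]
  have hsplit : ((Finset.range n ×ˢ Finset.range (lam 0)).filter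
        fun p => j ∈ Phi n L M p.1 p.2)
      = ((Finset.range n ×ˢ Finset.range (lam 0)).filter
          fun p => L (j - 1) p.1 ≤ p.2 ∧ p.2 < L j p.1)
        ∪ ((Finset.range n ×ˢ Finset.range (lam 0)).filter
          fun p => (p.1 + 1, j) ∈ M ∧ p.2 + 1 = L (j - 1) p.1) := by
    rw [← Finset.filter_or]
    apply Finset.filter_congr
    intro p _
    rw [mem_Phi_iff]
    constructor
    · rintro ⟨_, h⟩; exact h
    · intro h; exact ⟨⟨hj1, hjn⟩, h⟩
  have hdisj : Disjoint
      ((Finset.range n ×ˢ Finset.range (lam 0)).filter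
          fun p => L (j - 1) p.1 ≤ p.2 ∧ p.2 < L j p.1)
      ((Finset.range n ×ˢ Finset.range (lam 0)).filter
          fun p => (p.1 + 1, j) ∈ M ∧ p.2 + 1 = L (j - 1) p.1) := by
    rw [Finset.disjoint_left]
    intro p h1 h2
    simp only [Finset.mem_filter] at h1 h2
    omega
  rw [hsplit, Finset.card_union_of_disjoint hdisj]
  congr 1
  · -- first card equals gtSize difference
    have h1 : ((Finset.range n ×ˢ Finset.range (lam 0)).filter
          fun p => L (j - 1) p.1 ≤ p.2 ∧ p.2 < L j p.1).card
        = ∑ r ∈ Finset.range n, (L j r - L (j - 1) r) := by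
      rw [Finset.card_filter, Finset.sum_product]
      apply Finset.sum_congr rfl
      intro r _
      rw [← Finset.card_filter]
      have hfe : (Finset.range (lam 0)).filter (fun c => L (j - 1) r ≤ c ∧ c < L j r)
          = Finset.Ico (L (j - 1) r) (L j r) := by
        have hb : L j r ≤ lam 0 := le_trans (gtL_le_lam hL j r) (lam_le_lam0 hlam r)
        ext c
        simp only [Finset.mem_filter, Finset.mem_range, Finset.mem_Ico]
        omega
      rw [hfe, Nat.card_Ico]
    rw [h1]
    have hsum : gtSize n L (j - 1) + ∑ r ∈ Finset.range n, (L j r - L (j - 1) r)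
        = gtSize n L j := by
      rw [gtSize, gtSize, ← Finset.sum_add_distrib]
      apply Finset.sum_congr rfl
      intro r _
      have := gtL_mono hL j hjn (j - 1) (by omega) r
      omega
    omega
  · -- second card equals number of markings in column j
    apply Finset.card_bij (fun p _ => ((p.1 + 1 : ℕ), j))
    · intro p hp
      simp only [Finset.mem_filter] at hp
      exact Finset.mem_filter.mpr ⟨hp.2.1, rfl⟩
    · intro p hp p' hp' heq
      obtain ⟨r, c⟩ := p
      obtain ⟨r', c'⟩ := p'
      simp only [Finset.mem_filter, Finset.mem_product, Finset.mem_range] at hp hp'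
      simp only [Prod.mk.injEq] at heq ⊢
      have hr : r = r' := by omega
      subst hr
      have e1 := hp.2.2
      have e2 := hp'.2.2
      exact ⟨rfl, by omega⟩
    · intro b hb
      simp only [Finset.mem_filter] at hb
      obtain ⟨hbM, hbj⟩ := hb
      obtain ⟨hi1, hj2, hjn', hlt⟩ := hM b hbM
      have hpos : 1 ≤ L (b.2 - 1) (b.1 - 1) := by omega
      have hrn : b.1 - 1 < n := by
        by_contra hr
        push_neg at hr
        have h1 := gtL_le_lam hL (b.2 - 1) (b.1 - 1)
        rw [hlam.2 _ hr] at h1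
        omega
      have hc0 : L (b.2 - 1) (b.1 - 1) - 1 < lam 0 := by
        have h1 := gtL_le_lam hL (b.2 - 1) (b.1 - 1)
        have h2 := lam_le_lam0 hlam (b.1 - 1)
        omega
      subst hbj
      refine ⟨(b.1 - 1, L (b.2 - 1) (b.1 - 1) - 1), ?_, ?_⟩
      · simp only [Finset.mem_filter, Finset.mem_product, Finset.mem_range]
        refine ⟨⟨hrn, hc0⟩, ?_, by omega⟩
        rw [show b.1 - 1 + 1 = b.1 by omega, Prod.mk.eta]
        exact hbM
      · simp only
        rw [show b.1 - 1 + 1 = b.1 by omega, Prod.mk.eta]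

lemma xwt_Phi (hlam : IsPartitionShape n lam) (hL : IsGT n lam L) (hM : IsMarking n L M) :
    xwt n lam (Phi n L M) = ∏ j ∈ Finset.Icc 1 n,
      (MvPolynomial.X j : KPoly) ^
        (gtSize n L j - gtSize n L (j - 1) + (M.filter fun q => q.2 = j).card) := by
  rw [xwt]
  apply Finset.prod_congr rfl
  intro j hj
  rw [wt_Phi hlam hL hM (Finset.mem_Icc.mp hj).1 (Finset.mem_Icc.mp hj).2]

lemma lt_Lof_iff (ht : IsSVT n lam t) {j : ℕ} (hj : j ≤ n) {r c : ℕ} :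
    c < Lof n lam t j r ↔ c < lam r ∧ ∃ a ∈ t r c, a ≤ j := by
  have hdc : ∀ c, c + 1 ∈ (Finset.range (lam r)).filter (fun c => ∃ a ∈ t r c, a ≤ j) →
      c ∈ (Finset.range (lam r)).filter (fun c => ∃ a ∈ t r c, a ≤ j) := by
    intro c hc
    simp only [Finset.mem_filter, Finset.mem_range] at hc ⊢
    obtain ⟨hlt, a, ha, haj⟩ := hc
    have hcr : c < lam r := by omega
    obtain ⟨b, hb⟩ := ht.boxNonempty r c hcr
    exact ⟨hcr, b, hb, le_trans (ht.rowWeak r c b a hb ha) haj⟩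
  rw [Lof, if_pos hj, ← mem_iff_lt_card_of_downclosed _ hdc]
  simp [Finset.mem_filter, Finset.mem_range]

lemma isGT_Lof (hlam : IsPartitionShape n lam) (ht : IsSVT n lam t) :
    IsGT n lam (Lof n lam t) := by
  refine ⟨?_, ?_, ?_, ?_, ?_, ?_⟩
  · intro r
    rw [Lof, if_pos (Nat.zero_le n), Finset.card_eq_zero, Finset.filter_eq_empty_iff]
    rintro c _ ⟨a, ha, ha0⟩
    have := (ht.entryBounds r c a ha).1
    omega
  · intro r
    rw [Lof, if_pos le_rfl, Finset.filter_true_of_mem, Finset.card_range]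
    intro c hc
    obtain ⟨a, ha⟩ := ht.boxNonempty r c (Finset.mem_range.mp hc)
    exact ⟨a, ha, (ht.entryBounds r c a ha).2⟩
  · intro j r hj
    apply nat_le_of_lt_imp
    intro c hc
    rw [lt_Lof_iff ht hj] at hc ⊢
    obtain ⟨hcr, a, ha, haj⟩ := hc
    have hcr' : c < lam r := lt_of_lt_of_le hcr (hlam.1 r)
    obtain ⟨b, hb⟩ := ht.boxNonempty r c hcr'
    exact ⟨hcr', b, hb, le_trans (le_of_lt (ht.colStrict r c b a hb ha)) haj⟩
  · intro j r hj
    apply nat_le_of_lt_imp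
    intro c hc
    rw [lt_Lof_iff ht (by omega)] at hc
    rw [lt_Lof_iff ht (by omega)]
    obtain ⟨hcr, a, ha, haj⟩ := hc
    exact ⟨hcr, a, ha, by omega⟩
  · intro j r hj
    apply nat_le_of_lt_imp
    intro c hc
    rw [lt_Lof_iff ht (by omega)] at hc
    rw [lt_Lof_iff ht (by omega)]
    obtain ⟨hcr, a, ha, haj⟩ := hc
    have hcr' : c < lam r := lt_of_lt_of_le hcr (hlam.1 r)
    obtain ⟨b, hb⟩ := ht.boxNonempty r c hcr'
    have := ht.colStrict r c b a hb ha
    exact ⟨hcr', b, hb, by omega⟩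
  · intro j r hj
    rw [Lof, if_neg (by omega)]

lemma mem_Mof_iff {p : ℕ × ℕ} :
    p ∈ Mof n lam t ↔ (1 ≤ p.1 ∧ p.1 ≤ n) ∧ (2 ≤ p.2 ∧ p.2 ≤ n) ∧
      ∃ c, c < lam (p.1 - 1) ∧ p.2 ∈ t (p.1 - 1) c ∧ ∃ a ∈ t (p.1 - 1) c, a < p.2 := by
  unfold Mof
  simp only [Finset.mem_filter, Finset.mem_product, Finset.mem_Icc]
  tauto

lemma isMarking_Mof (ht : IsSVT n lam t) : IsMarking n (Lof n lam t) (Mof n lam t) := by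
  intro p hp
  rw [mem_Mof_iff] at hp
  obtain ⟨⟨hi1, hin⟩, ⟨hj2, hjn⟩, c, hc, hjmem, a, ha, haj⟩ := hp
  refine ⟨hi1, hj2, hjn, ?_⟩
  have h1 : c < Lof n lam t (p.2 - 1) (p.1 - 1) := by
    rw [lt_Lof_iff ht (by omega)]
    exact ⟨hc, a, ha, by omega⟩
  have h2 : ¬ c < Lof n lam t p.2 (p.1 - 1 + 1) := by
    rw [lt_Lof_iff ht hjn]
    rintro ⟨_, b, hb, hbj⟩
    have := ht.colStrict (p.1 - 1) c p.2 b hjmem hb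
    omega
  rw [show p.1 - 1 + 1 = p.1 by omega] at h2
  omega

lemma Phi_Lof_Mof (hlam : IsPartitionShape n lam) (ht : IsSVT n lam t) :
    Phi n (Lof n lam t) (Mof n lam t) = t := by
  have hL := isGT_Lof hlam ht
  funext r c
  by_cases hc : c < lam r
  case neg => rw [Phi_empty hL hc, ht.emptyOutside r c hc]
  ext a
  rw [mem_Phi_iff]
  constructor
  · rintro ⟨⟨ha1, han⟩, ⟨hle, hlt⟩ | ⟨hmem, heq⟩⟩
    · -- min clause
      rw [lt_Lof_iff ht han] at hlt
      obtain ⟨_, x, hx, hxa⟩ := hlt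
      have hnot : ¬ c < Lof n lam t (a - 1) r := by omega
      rw [lt_Lof_iff ht (by omega)] at hnot
      push_neg at hnot
      have := hnot hc x hx
      have hxa' : x = a := by omega
      rwa [← hxa']
    · -- marking clause
      rw [mem_Mof_iff] at hmem
      obtain ⟨_, _, c', hc', hjm, y, hy, hya⟩ := hmem
      simp only [Nat.add_sub_cancel] at hc' hjm hy
      have h1 : c' < Lof n lam t (a - 1) r := by
        rw [lt_Lof_iff ht (by omega)]
        exact ⟨hc', y, hy, by omega⟩
      have h2 : ¬ c' + 1 < Lof n lam t (a - 1) r := by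
        rw [lt_Lof_iff ht (by omega)]
        rintro ⟨hcc, z, hz, hza⟩
        have := ht.rowWeak r c' a z hjm hz
        omega
      have hcc' : c' = c := by omega
      rwa [← hcc']
  · intro ha
    have hb := ht.entryBounds r c a ha
    refine ⟨hb, ?_⟩
    by_cases hmin : ∀ y ∈ t r c, a ≤ y
    · left
      constructor
      · have hnot : ¬ c < Lof n lam t (a - 1) r := by
          rw [lt_Lof_iff ht (by omega)]
          rintro ⟨_, y, hy, hya⟩
          have := hmin y hy
          omega
        omega
      · rw [lt_Lof_iff ht hb.2]
        exact ⟨hc, a, ha, le_rfl⟩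
    · right
      push_neg at hmin
      obtain ⟨y, hy, hya⟩ := hmin
      have hrn : r < n := by
        by_contra hrn
        push_neg at hrn
        rw [hlam.2 r hrn] at hc
        omega
      have heq : c + 1 = Lof n lam t (a - 1) r := by
        have h1 : c < Lof n lam t (a - 1) r := by
          rw [lt_Lof_iff ht (by omega)]
          exact ⟨hc, y, hy, by omega⟩
        have h2 : ¬ c + 1 < Lof n lam t (a - 1) r := by
          rw [lt_Lof_iff ht (by omega)]
          rintro ⟨_, z, hz, hza⟩
          have := ht.rowWeak r c a z ha hz
          omega
        omega
      refine ⟨?_, heq⟩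
      rw [mem_Mof_iff]
      have hy1 := (ht.entryBounds r c y hy).1
      simp only [Nat.add_sub_cancel]
      exact ⟨⟨by omega, by omega⟩, ⟨by omega, hb.2⟩, c, hc, ha, y, hy, hya⟩

lemma Lof_Phi (hlam : IsPartitionShape n lam) (hL : IsGT n lam L) (hM : IsMarking n L M) :
    Lof n lam (Phi n L M) = L := by
  funext j r
  by_cases hj : j ≤ n
  case neg => rw [Lof, if_neg hj, hL.2.2.2.2.2 j r (by omega)]
  rw [Lof, if_pos hj]
  have hfe : (Finset.range (lam r)).filter (fun c => ∃ a ∈ Phi n L M r c, a ≤ j)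
      = Finset.range (L j r) := by
    ext c
    simp only [Finset.mem_filter, Finset.mem_range]
    constructor
    · rintro ⟨hc, a, ha, haj⟩
      exact lt_of_lt_of_le (mem_Phi_lt hL ha) (gtL_mono hL j hj a haj r)
    · intro hc
      have hcr : c < lam r := lt_of_lt_of_le hc (gtL_le_lam hL j r)
      obtain ⟨m, hm1, hmn, hml, hmr, hmin⟩ := exists_min_clause hL hcr
      exact ⟨hcr, m, mem_Phi_iff.mpr ⟨⟨hm1, hmn⟩, Or.inl ⟨hml, hmr⟩⟩, hmin j hc⟩
  rw [hfe, Finset.card_range]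

lemma Mof_Phi (hlam : IsPartitionShape n lam) (hL : IsGT n lam L) (hM : IsMarking n L M) :
    Mof n lam (Phi n L M) = M := by
  ext p
  rw [mem_Mof_iff]
  constructor
  · rintro ⟨⟨hi1, hin⟩, ⟨hj2, hjn⟩, c, hc, hjm, a, ha, haj⟩
    rw [mem_Phi_iff] at hjm ha
    obtain ⟨_, hcl | hcl⟩ := hjm
    · exfalso
      obtain ⟨⟨ha1, han⟩, hacl | hacl⟩ := ha
      · have := min_clause_unique hL ha1 han (by omega) hjn hacl.1 hacl.2 hcl.1 hcl.2
        omega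
      · have h3 : L (a - 1) (p.1 - 1) ≤ L (p.2 - 1) (p.1 - 1) :=
          gtL_mono hL (p.2 - 1) (by omega) (a - 1) (by omega) _
        have h4 := hcl.1
        have h5 := hacl.2
        omega
    · have h6 := hcl.1
      rw [show p.1 - 1 + 1 = p.1 by omega, Prod.mk.eta] at h6
      exact h6
  · intro hp
    obtain ⟨hi1, hj2, hjn, hlt⟩ := hM p hp
    have hpos : 1 ≤ L (p.2 - 1) (p.1 - 1) := by omega
    have hrn : p.1 - 1 < n := by
      by_contra hr
      push_neg at hr
      have h1 := gtL_le_lam hL (p.2 - 1) (p.1 - 1)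
      rw [hlam.2 _ hr] at h1
      omega
    have hcr : L (p.2 - 1) (p.1 - 1) - 1 < lam (p.1 - 1) := by
      have h1 := gtL_le_lam hL (p.2 - 1) (p.1 - 1)
      omega
    obtain ⟨m, hm1, hmn, hml, hmr, hmin⟩ := exists_min_clause hL hcr
    refine ⟨⟨hi1, by omega⟩, ⟨hj2, hjn⟩, L (p.2 - 1) (p.1 - 1) - 1, hcr, ?_, m,
      mem_Phi_iff.mpr ⟨⟨hm1, hmn⟩, Or.inl ⟨hml, hmr⟩⟩, ?_⟩
    · rw [mem_Phi_iff]
      refine ⟨⟨by omega, hjn⟩, Or.inr ⟨?_, by omega⟩⟩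
      rw [show p.1 - 1 + 1 = p.1 by omega, Prod.mk.eta]
      exact hp
    · have h7 : m ≤ p.2 - 1 := hmin (p.2 - 1) (by omega)
      omega

end MarkedGT


/-- the symmetric Grothendieck polynomial as a sum over marked
Gelfand–Tsetlin patterns with top row `λ`:
`𝔊_λ = ∑_{(Λ,M)} β^{|M|} ∏_j x_j^{|λ⁽ʲ⁾| - |λ⁽ʲ⁻¹⁾| + |M⁽ʲ⁾|}`. -/
theorem groth_marked_GT (n : ℕ) (lam : ℕ → ℕ) (hlam : IsPartitionShape n lam) :
    Groth n lam =
      ∑ᶠ p ∈ {p : (ℕ → ℕ → ℕ) × Finset (ℕ × ℕ) |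
          IsGT n lam p.1 ∧ IsMarking n p.1 p.2},
        betaP ^ p.2.card *
          ∏ j ∈ Finset.Icc 1 n,
            (MvPolynomial.X j : KPoly) ^
              (gtSize n p.1 j - gtSize n p.1 (j - 1) +
                (p.2.filter fun q => q.2 = j).card) := by
  have hinv : Set.InvOn (fun u : Filling => (Lof n lam u, Mof n lam u))
      (fun p : (ℕ → ℕ → ℕ) × Finset (ℕ × ℕ) => Phi n p.1 p.2)
      {p : (ℕ → ℕ → ℕ) × Finset (ℕ × ℕ) | IsGT n lam p.1 ∧ IsMarking n p.1 p.2}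
      {t : Filling | IsSVT n lam t} := by
    constructor
    · intro p hp
      exact Prod.ext (Lof_Phi hlam hp.1 hp.2) (Mof_Phi hlam hp.1 hp.2)
    · intro u hu
      exact Phi_Lof_Mof hlam hu
  have hbij : Set.BijOn (fun p : (ℕ → ℕ → ℕ) × Finset (ℕ × ℕ) => Phi n p.1 p.2)
      {p : (ℕ → ℕ → ℕ) × Finset (ℕ × ℕ) | IsGT n lam p.1 ∧ IsMarking n p.1 p.2}
      {t : Filling | IsSVT n lam t} :=
    hinv.bijOn (fun p hp => isSVT_Phi hlam hp.1 hp.2)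
      (fun u hu => ⟨isGT_Lof hlam hu, isMarking_Mof hu⟩)
  rw [Groth, charSet]
  exact (finsum_mem_eq_of_bijOn _ hbij (fun p hp => by
    rw [excess_Phi hlam hp.1 hp.2, xwt_Phi hlam hp.1 hp.2])).symm

end SVTCrystal

end
end

section
/- Let λ be a partition with at most n parts. Then, as polynomials in ℤ[β][x_1,…,x_n], 𝔊_λ(x_1,…,x_n;β) = Σ_Λ ( Π_{j=1}^n x_j^{|λ^{(j)}| − |λ^{(j−1)}|} ) · Π_{j=2}^n (1 + βx_j)^{m_j(Λ)}, where the sum runs over all Gelfand–Tsetlin patterns Λ = (λ^{(0)},…,λ^{(n)}) with top row λ, and m_j(Λ) = #{ i ≥ 1 : λ^{(j)}_{i+1} < λ^{(j−1)}_i } is the number of markable entries in row j. -/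
open scoped Classical

noncomputable section

namespace SVTCrystal

/-- `m_j(Λ) = #{i ≥ 1 : λ⁽ʲ⁾_{i+1} < λ⁽ʲ⁻¹⁾_i}`, the number of markable entries in
row `j`. -/
def mjCount (n : ℕ) (L : ℕ → ℕ → ℕ) (j : ℕ) : ℕ :=
  ((Finset.Icc 1 n).filter fun i => L j i < L (j - 1) (i - 1)).card


/-!
Sending a set-valued tableau `T` to the chain of shapes `λ⁽ʲ⁾` formed by the boxes whose least
entry is at most `j` gives a Gelfand–Tsetlin pattern with top row `λ`. An entry `j` of `T` that
is not the least entry of its box is forced into the last box of some row `r` of `λ⁽ʲ⁻¹⁾`, and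
column strictness allows this exactly when `λ⁽ʲ⁾_{r+1} < λ⁽ʲ⁻¹⁾_r`. So the tableaux over a fixed
pattern correspond to arbitrary sets of markable positions, each chosen mark `(j, r)`
contributing a factor `β x_j`, and summing over all sets of marks gives `∏ (1 + β x_j)^{m_j}`.
-/

open Finset

lemma add_sum_Icc_tsub_eq {f : ℕ → ℕ} {m : ℕ} (hf : ∀ j < m, f j ≤ f (j + 1)) :
    f 0 + ∑ j ∈ Icc 1 m, (f j - f (j - 1)) = f m := by
  induction m with
  | zero => simp
  | succ m ih =>
    rw [sum_Icc_succ_top (by omega), ← add_assoc, ih fun j hj => hf j (by omega),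
      Nat.add_sub_cancel]
    have := hf m (by omega)
    omega

lemma lt_card_filter_range_iff {m c : ℕ} {P : ℕ → Prop} [DecidablePred P]
    (hP : ∀ x y, x ≤ y → y < m → P y → P x) :
    c < #{x ∈ range m | P x} ↔ c < m ∧ P c := by
  constructor
  · intro hc
    by_contra hnot
    have hsub : {x ∈ range m | P x} ⊆ range c := by
      intro x hx
      rw [mem_filter, mem_range] at hx
      rw [mem_range]
      by_contra hcx
      exact hnot ⟨by omega, hP c x (by omega) hx.1 hx.2⟩
    have := card_le_card hsub
    rw [card_range] at this
    omega
  · rintro ⟨hcm, hPc⟩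
    have hsub : range (c + 1) ⊆ {x ∈ range m | P x} := by
      intro x hx
      rw [mem_range] at hx
      rw [mem_filter, mem_range]
      exact ⟨by omega, hP x c (by omega) hcm hPc⟩
    have := card_le_card hsub
    rw [card_range] at this
    omega

lemma prod_filter_product_eq_prod_pow {α β M : Type*} [CommMonoid M] (s : Finset α)
    (u : Finset β) (P : α × β → Prop) [DecidablePred P] (g : α → M) :
    ∏ p ∈ s ×ˢ u with P p, g p.1 = ∏ a ∈ s, g a ^ #{b ∈ u | P (a, b)} := by
  rw [prod_filter, prod_product]
  refine prod_congr rfl fun a _ => ?_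
  rw [← prod_filter]
  exact prod_const (g a)

variable {n : ℕ} {lam : ℕ → ℕ}

lemma IsPartitionShape.antitone (hlam : IsPartitionShape n lam) : Antitone lam :=
  antitone_nat_of_succ_le hlam.1

lemma IsPartitionShape.lt_of_lt_lam (hlam : IsPartitionShape n lam) {r c : ℕ}
    (hc : c < lam r) : r < n := by
  by_contra h
  rw [hlam.2 r (by omega)] at hc
  omega

namespace IsGT

variable {L : ℕ → ℕ → ℕ} (hL : IsGT n lam L)
include hL

lemma mono {j j' r : ℕ} (h : j ≤ j') (h' : j' ≤ n) : L j r ≤ L j' r := by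
  induction j', h using Nat.le_induction with
  | base => rfl
  | succ k _ ih => exact (ih (by omega)).trans (hL.2.2.2.1 k r (by omega))

lemma le_lam {j r : ℕ} (h : j ≤ n) : L j r ≤ lam r :=
  hL.2.1 r ▸ hL.mono h le_rfl

lemma exists_strip {j r c : ℕ} (hc : c < L j r) :
    ∃ a, 1 ≤ a ∧ a ≤ j ∧ L (a - 1) r ≤ c ∧ c < L a r := by
  have hex : ∃ a, c < L a r := ⟨j, hc⟩
  have ha : c < L (Nat.find hex) r := Nat.find_spec hex
  have ha0 : Nat.find hex ≠ 0 := fun h0 => by rw [h0, hL.1 r] at ha; omega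
  exact ⟨Nat.find hex, by omega, Nat.find_min' hex hc,
    not_lt.1 (Nat.find_min hex (by omega)), ha⟩

lemma sum_Icc_gtSize_tsub :
    ∑ j ∈ Icc 1 n, (gtSize n L j - gtSize n L (j - 1)) = ∑ r ∈ range n, lam r := by
  have h0 : gtSize n L 0 = 0 := sum_eq_zero fun r _ => hL.1 r
  have := add_sum_Icc_tsub_eq (f := gtSize n L) (m := n)
    fun j hj => sum_le_sum fun r _ => hL.2.2.2.1 j r hj
  rw [h0, zero_add] at this
  rw [this, gtSize]
  exact sum_congr rfl fun r _ => hL.2.1 r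

lemma eq_zero_of_le {j r : ℕ} (hlam : IsPartitionShape n lam) (h : n < j ∨ n ≤ r) :
    L j r = 0 := by
  rcases h with h | h
  · exact hL.2.2.2.2.2 j r h
  · by_cases hj : j ≤ n
    · have := hL.le_lam (r := r) hj
      rw [hlam.2 r h] at this
      omega
    · exact hL.2.2.2.2.2 j r (by omega)

end IsGT

lemma finite_setOf_isGT (hlam : IsPartitionShape n lam) : {L | IsGT n lam L}.Finite := by
  refine Set.Finite.of_finite_image (f := fun L (p : Fin (n + 1) × Fin n) => L p.1 p.2) ?_ ?_
  · refine (Set.Finite.pi (t := fun _ => Set.Iic (lam 0)) fun _ => Set.finite_Iic _).subset ?_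
    rintro _ ⟨L, hL, rfl⟩ p -
    exact (hL.le_lam (by omega)).trans (hlam.antitone (Nat.zero_le _))
  · intro L hL L' hL' h
    funext j r
    by_cases hjr : j ≤ n ∧ r < n
    · exact congrFun h (⟨j, by omega⟩, ⟨r, hjr.2⟩)
    · have hout : n < j ∨ n ≤ r := by omega
      rw [hL.eq_zero_of_le hlam hout, hL'.eq_zero_of_le hlam hout]

namespace IsSVT

variable {t : Filling} (hst : IsSVT n lam t)
include hst

lemma lt_lam_of_mem {r c a : ℕ} (ha : a ∈ t r c) : c < lam r := by
  by_contra h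
  rw [hst.emptyOutside r c h] at ha
  exact notMem_empty a ha

lemma le_of_mem_of_lt {r c c' a b : ℕ} (hcc : c < c') (ha : a ∈ t r c) (hb : b ∈ t r c') :
    a ≤ b := by
  induction c', hcc using Nat.le_induction generalizing b with
  | base => exact hst.rowWeak r c a b ha hb
  | succ c' hcc ih =>
    obtain ⟨x, hx⟩ := hst.boxNonempty r c' (by have := hst.lt_lam_of_mem hb; omega)
    exact (ih hx).trans (hst.rowWeak r c' x b hx hb)

lemma exists_mem_le_of_le {r c c' j : ℕ} (hcc : c' ≤ c) (h : ∃ a ∈ t r c, a ≤ j) :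
    ∃ a ∈ t r c', a ≤ j := by
  obtain ⟨a, ha, haj⟩ := h
  rcases hcc.eq_or_lt with rfl | hlt
  · exact ⟨a, ha, haj⟩
  · obtain ⟨b, hb⟩ := hst.boxNonempty r c' (hlt.trans (hst.lt_lam_of_mem ha))
    exact ⟨b, hb, (hst.le_of_mem_of_lt hlt hb ha).trans haj⟩

lemma exists_mem_above (hlam : IsPartitionShape n lam) {r c a : ℕ} (ha : a ∈ t (r + 1) c) :
    c < lam r ∧ ∃ b ∈ t r c, b < a := by
  have hc : c < lam r := (hst.lt_lam_of_mem ha).trans_le (hlam.1 r)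
  obtain ⟨b, hb⟩ := hst.boxNonempty r c hc
  exact ⟨hc, b, hb, hst.colStrict r c b a hb ha⟩

end IsSVT

def gtOf (n : ℕ) (lam : ℕ → ℕ) (t : Filling) : ℕ → ℕ → ℕ := fun j r =>
  if j ≤ n then #{c ∈ range (lam r) | ∃ a ∈ t r c, a ≤ j} else 0

variable {t : Filling}

lemma gtOf_le_lam {j r : ℕ} : gtOf n lam t j r ≤ lam r := by
  unfold gtOf
  split
  · exact (card_filter_le _ _).trans (card_range _).le
  · exact Nat.zero_le _

lemma lt_gtOf_iff (hst : IsSVT n lam t) {j r c : ℕ} (hj : j ≤ n) :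
    c < gtOf n lam t j r ↔ c < lam r ∧ ∃ a ∈ t r c, a ≤ j := by
  rw [gtOf, if_pos hj]
  exact lt_card_filter_range_iff fun _ _ hxy _ h => hst.exists_mem_le_of_le hxy h

lemma isGT_gtOf (hst : IsSVT n lam t) (hlam : IsPartitionShape n lam) :
    IsGT n lam (gtOf n lam t) := by
  refine ⟨fun r => ?_, fun r => ?_, fun j r hj => ?_, fun j r hj => ?_, fun j r hj => ?_,
    fun j r hj => if_neg (by omega)⟩
  · refine Nat.eq_zero_of_not_pos fun h => ?_
    obtain ⟨-, a, ha, ha0⟩ := (lt_gtOf_iff hst (Nat.zero_le n)).1 h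
    have := (hst.entryBounds _ _ _ ha).1
    omega
  · refine le_antisymm gtOf_le_lam (le_of_forall_lt fun c hc => ?_)
    obtain ⟨a, ha⟩ := hst.boxNonempty r c hc
    exact (lt_gtOf_iff hst le_rfl).2 ⟨hc, a, ha, (hst.entryBounds r c a ha).2⟩
  · refine le_of_forall_lt fun c hc => ?_
    obtain ⟨-, a, ha, haj⟩ := (lt_gtOf_iff hst hj).1 hc
    obtain ⟨hcr, b, hb, hba⟩ := hst.exists_mem_above hlam ha
    exact (lt_gtOf_iff hst hj).2 ⟨hcr, b, hb, by omega⟩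
  · refine le_of_forall_lt fun c hc => ?_
    obtain ⟨hcr, a, ha, haj⟩ := (lt_gtOf_iff hst hj.le).1 hc
    exact (lt_gtOf_iff hst hj).2 ⟨hcr, a, ha, by omega⟩
  · refine le_of_forall_lt fun c hc => ?_
    obtain ⟨-, a, ha, haj⟩ := (lt_gtOf_iff hst hj).1 hc
    obtain ⟨hcr, b, hb, hba⟩ := hst.exists_mem_above hlam ha
    exact (lt_gtOf_iff hst hj.le).2 ⟨hcr, b, hb, by omega⟩

lemma mem_of_gtOf_le_of_lt (hst : IsSVT n lam t) {j r c : ℕ} (hjn : j ≤ n)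
    (h₁ : gtOf n lam t (j - 1) r ≤ c) (h₂ : c < gtOf n lam t j r) : j ∈ t r c := by
  obtain ⟨hc, a, ha, haj⟩ := (lt_gtOf_iff hst hjn).1 h₂
  have : ¬ a ≤ j - 1 := fun h => by
    have := (lt_gtOf_iff hst (by omega)).2 ⟨hc, a, ha, h⟩
    omega
  rwa [show j = a by omega]

lemma gtOf_strip_or_corner_of_mem (hst : IsSVT n lam t) {j r c : ℕ} (hjn : j ≤ n)
    (hmem : j ∈ t r c) :
    (gtOf n lam t (j - 1) r ≤ c ∧ c < gtOf n lam t j r) ∨ c + 1 = gtOf n lam t (j - 1) r := by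
  rcases le_or_gt (gtOf n lam t (j - 1) r) c with h | h
  · exact Or.inl ⟨h, (lt_gtOf_iff hst hjn).2 ⟨hst.lt_lam_of_mem hmem, j, hmem, le_rfl⟩⟩
  refine Or.inr (le_antisymm h (not_lt.1 fun hc1 => ?_))
  obtain ⟨-, a, ha, haj⟩ := (lt_gtOf_iff hst (by omega)).1 hc1
  have := hst.rowWeak r c j a hmem ha
  have := (hst.entryBounds r c j hmem).1
  omega

def IsExtra (t : Filling) (L : ℕ → ℕ → ℕ) (j r : ℕ) : Prop :=
  0 < L (j - 1) r ∧ j ∈ t r (L (j - 1) r - 1)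

def extras (n : ℕ) (t : Filling) (L : ℕ → ℕ → ℕ) : Finset (ℕ × ℕ) :=
  {p ∈ Icc 1 n ×ˢ range n | IsExtra t L p.1 p.2}

lemma card_filter_mem_row (hst : IsSVT n lam t) (hlam : IsPartitionShape n lam) {j r : ℕ}
    (hjn : j ≤ n) :
    #{c ∈ range (lam 0) | j ∈ t r c} = (gtOf n lam t j r - gtOf n lam t (j - 1) r) +
      if IsExtra t (gtOf n lam t) j r then 1 else 0 := by
  have hlam0 : lam r ≤ lam 0 := hlam.antitone (Nat.zero_le r)
  have hLj : gtOf n lam t j r ≤ lam r := gtOf_le_lam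
  have hset : {c ∈ range (lam 0) | j ∈ t r c} =
      Ico (gtOf n lam t (j - 1) r) (gtOf n lam t j r) ∪
        if IsExtra t (gtOf n lam t) j r then {gtOf n lam t (j - 1) r - 1} else ∅ := by
    ext c
    simp only [mem_filter, mem_range, mem_union, mem_Ico]
    constructor
    · rintro ⟨-, hmem⟩
      rcases gtOf_strip_or_corner_of_mem hst hjn hmem with h | h
      · exact Or.inl h
      · have hE : IsExtra t (gtOf n lam t) j r :=
          ⟨by omega, by rwa [show gtOf n lam t (j - 1) r - 1 = c by omega]⟩
        simp only [hE, if_true, mem_singleton]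
        omega
    · rintro (⟨h₁, h₂⟩ | h)
      · exact ⟨by omega, mem_of_gtOf_le_of_lt hst hjn h₁ h₂⟩
      · split_ifs at h with hE
        · rw [mem_singleton.1 h]
          exact ⟨by have := hst.lt_lam_of_mem hE.2; omega, hE.2⟩
        · exact absurd h (notMem_empty c)
  have hdisj : Disjoint (Ico (gtOf n lam t (j - 1) r) (gtOf n lam t j r))
      (if IsExtra t (gtOf n lam t) j r then {gtOf n lam t (j - 1) r - 1} else ∅) := by
    split_ifs with hE
    · rw [disjoint_singleton_right, mem_Ico]
      have := hE.1
      omega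
    · exact disjoint_empty_right _
  rw [hset, card_union_of_disjoint hdisj, Nat.card_Ico]
  split_ifs <;> rfl

lemma wt_eq (hst : IsSVT n lam t) (hlam : IsPartitionShape n lam) {j : ℕ} (hjn : j ≤ n) :
    wt n lam t j = (gtSize n (gtOf n lam t) j - gtSize n (gtOf n lam t) (j - 1)) +
      #{r ∈ range n | IsExtra t (gtOf n lam t) j r} := by
  have hrows : wt n lam t j = ∑ r ∈ range n, #{c ∈ range (lam 0) | j ∈ t r c} := by
    rw [wt, card_filter, sum_product]
    exact sum_congr rfl fun r _ => (card_filter _ _).symm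
  rw [hrows, sum_congr rfl fun r _ => card_filter_mem_row hst hlam hjn,
    sum_add_distrib, gtSize, gtSize, ← sum_tsub_distrib, ← card_filter]
  exact fun r _ => (isGT_gtOf hst hlam).mono (by omega) hjn

lemma IsSVT.sum_card_row (hst : IsSVT n lam t) (hlam : IsPartitionShape n lam) (r : ℕ) :
    ∑ c ∈ range (lam 0), #(t r c) = ∑ c ∈ range (lam 0), (#(t r c) - 1) + lam r := by
  have hsub : range (lam r) ⊆ range (lam 0) := range_mono (hlam.antitone (Nat.zero_le r))
  have hout : ∀ c ∈ range (lam 0), c ∉ range (lam r) → t r c = ∅ :=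
    fun c _ hc => hst.emptyOutside r c (by simpa using hc)
  rw [← sum_subset hsub fun c hc hc' => by rw [hout c hc hc']; rfl,
    ← sum_subset hsub fun c hc hc' => by rw [hout c hc hc']; rfl,
    sum_congr rfl fun c hc =>
      (Nat.sub_add_cancel (show 1 ≤ #(t r c) from
        card_pos.2 (hst.boxNonempty r c (mem_range.1 hc)))).symm,
    sum_add_distrib, sum_const, card_range, smul_eq_mul, mul_one]

lemma IsSVT.sum_card_eq_sum_wt (hst : IsSVT n lam t) :
    ∑ p ∈ range n ×ˢ range (lam 0), #(t p.1 p.2) = ∑ j ∈ Icc 1 n, wt n lam t j := by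
  simp only [wt, card_filter]
  rw [sum_comm]
  refine sum_congr rfl fun p _ => ?_
  rw [← card_filter, filter_mem_eq_inter, inter_eq_right.2]
  exact fun a ha => mem_Icc.2 (hst.entryBounds _ _ _ ha)

lemma excess_eq (hst : IsSVT n lam t) (hlam : IsPartitionShape n lam) :
    excess n lam t = #(extras n t (gtOf n lam t)) := by
  have hboxes : ∑ p ∈ range n ×ˢ range (lam 0), #(t p.1 p.2) =
      excess n lam t + ∑ r ∈ range n, lam r := by
    rw [excess, sum_product, sum_product, ← sum_add_distrib]
    exact sum_congr rfl fun r _ => hst.sum_card_row hlam r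
  have hweights : ∑ j ∈ Icc 1 n, wt n lam t j =
      ∑ r ∈ range n, lam r + #(extras n t (gtOf n lam t)) := by
    rw [sum_congr rfl fun j hj => wt_eq hst hlam (mem_Icc.1 hj).2,
      sum_add_distrib, (isGT_gtOf hst hlam).sum_Icc_gtSize_tsub, extras, card_filter,
      sum_product]
    simp only [card_filter]
  have hentries := hst.sum_card_eq_sum_wt
  omega

lemma betaP_pow_excess_mul_xwt (hst : IsSVT n lam t) (hlam : IsPartitionShape n lam) :
    betaP ^ excess n lam t * xwt n lam t =
      (∏ j ∈ Icc 1 n, (MvPolynomial.X j : KPoly) ^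
          (gtSize n (gtOf n lam t) j - gtSize n (gtOf n lam t) (j - 1))) *
        ∏ p ∈ extras n t (gtOf n lam t), betaP * MvPolynomial.X p.1 := by
  rw [prod_mul_distrib, prod_const, ← excess_eq hst hlam, extras,
    prod_filter_product_eq_prod_pow, xwt, mul_left_comm, ← prod_mul_distrib]
  congr 1
  refine prod_congr rfl fun j hj => ?_
  rw [wt_eq hst hlam (mem_Icc.1 hj).2, pow_add]

lemma mem_extras {L : ℕ → ℕ → ℕ} {j r : ℕ} :
    (j, r) ∈ extras n t L ↔ (1 ≤ j ∧ j ≤ n) ∧ r < n ∧ IsExtra t L j r := by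
  rw [extras, mem_filter, mem_product, mem_Icc, mem_range, and_assoc]

def markable (n : ℕ) (L : ℕ → ℕ → ℕ) : Finset (ℕ × ℕ) :=
  {p ∈ Icc 1 n ×ˢ range n | L p.1 (p.2 + 1) < L (p.1 - 1) p.2}

def tabOf (n : ℕ) (L : ℕ → ℕ → ℕ) (M : Finset (ℕ × ℕ)) : Filling := fun r c =>
  {j ∈ Icc 1 n | (L (j - 1) r ≤ c ∧ c < L j r) ∨ ((j, r) ∈ M ∧ c + 1 = L (j - 1) r)}

section tabOf

variable {L : ℕ → ℕ → ℕ} {M : Finset (ℕ × ℕ)}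

lemma mem_tabOf {j r c : ℕ} :
    j ∈ tabOf n L M r c ↔ (1 ≤ j ∧ j ≤ n) ∧
      ((L (j - 1) r ≤ c ∧ c < L j r) ∨ ((j, r) ∈ M ∧ c + 1 = L (j - 1) r)) := by
  rw [tabOf, mem_filter, mem_Icc]

lemma mem_markable {j r : ℕ} :
    (j, r) ∈ markable n L ↔ (1 ≤ j ∧ j ≤ n) ∧ r < n ∧ L j (r + 1) < L (j - 1) r := by
  rw [markable, mem_filter, mem_product, mem_Icc, mem_range, and_assoc]

lemma extras_tabOf (hM : M ⊆ markable n L) : extras n (tabOf n L M) L = M := by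
  ext ⟨j, r⟩
  rw [mem_extras, IsExtra, mem_tabOf]
  constructor
  · rintro ⟨-, -, hpos, -, ⟨h, -⟩ | ⟨hmark, -⟩⟩
    · omega
    · exact hmark
  · intro hmark
    obtain ⟨hj, hr, hlt⟩ := mem_markable.1 (hM hmark)
    exact ⟨hj, hr, by omega, hj, Or.inr ⟨hmark, by omega⟩⟩

variable (hL : IsGT n lam L) (hM : M ⊆ markable n L)
include hL hM

lemma isSVT_tabOf : IsSVT n lam (tabOf n L M) where
  boxNonempty r c hc := by
    obtain ⟨a, ha1, han, hstrip⟩ := hL.exists_strip (j := n) (by rwa [hL.2.1 r])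
    exact ⟨a, mem_tabOf.2 ⟨⟨ha1, han⟩, Or.inl hstrip⟩⟩
  emptyOutside r c hc := by
    refine eq_empty_of_forall_notMem fun a ha => ?_
    obtain ⟨⟨-, han⟩, hda⟩ := mem_tabOf.1 ha
    have h₁ := hL.le_lam (r := r) han
    have h₂ := hL.le_lam (r := r) (show a - 1 ≤ n by omega)
    omega
  entryBounds r c a ha := (mem_tabOf.1 ha).1
  rowWeak r c a b ha hb := by
    obtain ⟨⟨ha1, han⟩, hda⟩ := mem_tabOf.1 ha
    obtain ⟨⟨hb1, hbn⟩, hdb⟩ := mem_tabOf.1 hb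
    by_contra! hba
    have h₁ : L (b - 1) r ≤ L (a - 1) r := hL.mono (by omega) (by omega)
    have h₂ : L b r ≤ L (a - 1) r := hL.mono (by omega) (by omega)
    omega
  colStrict r c a b ha hb := by
    obtain ⟨⟨ha1, han⟩, hda⟩ := mem_tabOf.1 ha
    obtain ⟨⟨hb1, hbn⟩, hdb⟩ := mem_tabOf.1 hb
    by_contra! hba
    have hcb : c < L b (r + 1) := by
      have := hL.mono (Nat.sub_le b 1) hbn (r := r + 1)
      omega
    have h₁ : L b (r + 1) ≤ L a (r + 1) := hL.mono hba han
    rcases hda with ⟨hda, -⟩ | ⟨hmark, hda⟩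
    · have := hL.2.2.2.2.1 (a - 1) r (by omega)
      rw [Nat.sub_add_cancel ha1] at this
      omega
    · have := (mem_markable.1 (hM hmark)).2.2
      omega

lemma gtOf_tabOf : gtOf n lam (tabOf n L M) = L := by
  funext j r
  by_cases hj : j ≤ n
  · refine eq_of_forall_lt_iff fun c => ?_
    rw [lt_gtOf_iff (isSVT_tabOf hL hM) hj]
    constructor
    · rintro ⟨-, a, ha, haj⟩
      obtain ⟨⟨-, han⟩, hda⟩ := mem_tabOf.1 ha
      have h₁ := hL.mono haj hj (r := r)
      have h₂ := hL.mono (show a - 1 ≤ j by omega) hj (r := r)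
      omega
    · intro hc
      obtain ⟨a, ha1, haj, hstrip⟩ := hL.exists_strip hc
      exact ⟨hc.trans_le (hL.le_lam hj), a, mem_tabOf.2 ⟨⟨ha1, by omega⟩, Or.inl hstrip⟩, haj⟩
  · rw [gtOf, if_neg hj, hL.2.2.2.2.2 j r (by omega)]

end tabOf

lemma extras_subset_markable (hst : IsSVT n lam t) :
    extras n t (gtOf n lam t) ⊆ markable n (gtOf n lam t) := by
  rintro ⟨j, r⟩ hp
  obtain ⟨hj, hr, hpos, hmem⟩ := mem_extras.1 hp
  refine mem_markable.2 ⟨hj, hr, not_le.1 fun hle => ?_⟩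
  have hjn := hj.2
  obtain ⟨-, a, ha, haj⟩ := (lt_gtOf_iff hst hjn).1
    (show gtOf n lam t (j - 1) r - 1 < gtOf n lam t j (r + 1) by omega)
  have := hst.colStrict _ _ _ _ hmem ha
  omega

lemma tabOf_extras (hst : IsSVT n lam t) (hlam : IsPartitionShape n lam) :
    tabOf n (gtOf n lam t) (extras n t (gtOf n lam t)) = t := by
  funext r c
  ext j
  rw [mem_tabOf, mem_extras]
  constructor
  · rintro ⟨hj, ⟨h₁, h₂⟩ | ⟨⟨-, -, -, hmem⟩, hc⟩⟩
    · exact mem_of_gtOf_le_of_lt hst hj.2 h₁ h₂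
    · rwa [show gtOf n lam t (j - 1) r - 1 = c by omega] at hmem
  · intro hmem
    have hj := hst.entryBounds r c j hmem
    refine ⟨hj, (gtOf_strip_or_corner_of_mem hst hj.2 hmem).imp_right fun hc => ?_⟩
    refine ⟨⟨hj, hlam.lt_of_lt_lam (hst.lt_lam_of_mem hmem), by omega, ?_⟩, hc⟩
    rwa [show gtOf n lam t (j - 1) r - 1 = c by omega]

lemma card_filter_range_eq_mjCount (L : ℕ → ℕ → ℕ) (j : ℕ) :
    #{r ∈ range n | L j (r + 1) < L (j - 1) r} = mjCount n L j :=
  card_nbij' (· + 1) (· - 1)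
    (fun r hr => by
      simp only [coe_filter, mem_range, Set.mem_ofPred_eq, mem_Icc] at hr ⊢
      simpa [hr.2] using hr.1)
    (fun i hi => by
      simp only [coe_filter, mem_range, Set.mem_ofPred_eq, mem_Icc] at hi ⊢
      rw [Nat.sub_add_cancel hi.1.1]
      exact ⟨by omega, hi.2⟩)
    (fun r _ => Nat.add_sub_cancel r 1)
    (fun i hi => Nat.sub_add_cancel (mem_Icc.1 (mem_filter.1 hi).1).1)

section fiber

variable {L : ℕ → ℕ → ℕ} (hL : IsGT n lam L)
include hL

lemma setOf_gtOf_eq_image (hlam : IsPartitionShape n lam) :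
    {t | IsSVT n lam t ∧ gtOf n lam t = L} = tabOf n L '' ↑(markable n L).powerset := by
  ext t
  simp only [Set.mem_ofPred_eq, Set.mem_image, coe_powerset, Set.mem_preimage,
    Set.mem_powerset_iff, coe_subset]
  constructor
  · rintro ⟨hst, rfl⟩
    exact ⟨_, extras_subset_markable hst, tabOf_extras hst hlam⟩
  · rintro ⟨M, hM, rfl⟩
    exact ⟨isSVT_tabOf hL hM, gtOf_tabOf hL hM⟩

lemma betaP_pow_excess_mul_xwt_tabOf {M : Finset (ℕ × ℕ)} (hlam : IsPartitionShape n lam)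
    (hM : M ⊆ markable n L) :
    betaP ^ excess n lam (tabOf n L M) * xwt n lam (tabOf n L M) =
      (∏ j ∈ Icc 1 n, (MvPolynomial.X j : KPoly) ^ (gtSize n L j - gtSize n L (j - 1))) *
        ∏ p ∈ M, betaP * MvPolynomial.X p.1 := by
  rw [betaP_pow_excess_mul_xwt (isSVT_tabOf hL hM) hlam, gtOf_tabOf hL hM, extras_tabOf hM]

lemma prod_markable_one_add :
    ∏ p ∈ markable n L, (1 + betaP * MvPolynomial.X p.1 : KPoly) =
      ∏ j ∈ Icc 2 n, (1 + betaP * MvPolynomial.X j : KPoly) ^ mjCount n L j := by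
  have hm1 : mjCount n L 1 = 0 := by
    rw [mjCount, card_eq_zero, filter_eq_empty_iff]
    intro i _
    rw [Nat.sub_self, hL.1]
    exact Nat.not_lt_zero _
  rw [markable, prod_filter_product_eq_prod_pow _ _ (fun p => L p.1 (p.2 + 1) < L (p.1 - 1) p.2)
    (fun j => 1 + betaP * MvPolynomial.X j)]
  simp only [card_filter_range_eq_mjCount]
  refine (prod_subset (Icc_subset_Icc_left (by norm_num)) fun j hj hj2 => ?_).symm
  rw [show j = 1 by simp at hj hj2; omega, hm1, pow_zero]

end fiber

/-- the Tokuyama-type formula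
`𝔊_λ = ∑_Λ x^{wt Λ} ∏_{j=2}^n (1 + βx_j)^{m_j(Λ)}` over Gelfand–Tsetlin patterns `Λ` with
top row `λ`. -/
theorem groth_GT_tokuyama (n : ℕ) (lam : ℕ → ℕ) (hlam : IsPartitionShape n lam) :
    Groth n lam =
      ∑ᶠ L ∈ {L : ℕ → ℕ → ℕ | IsGT n lam L},
        (∏ j ∈ Finset.Icc 1 n,
          (MvPolynomial.X j : KPoly) ^ (gtSize n L j - gtSize n L (j - 1))) *
        ∏ j ∈ Finset.Icc 2 n,
          (1 + betaP * MvPolynomial.X j : KPoly) ^ mjCount n L j := by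
  have hunion : {t | IsSVT n lam t} =
      ⋃ L ∈ {L | IsGT n lam L}, {t | IsSVT n lam t ∧ gtOf n lam t = L} := by
    ext t
    simp only [Set.mem_ofPred_eq, Set.mem_iUnion, exists_prop]
    exact ⟨fun hst => ⟨_, isGT_gtOf hst hlam, hst, rfl⟩, fun ⟨_, _, hst, _⟩ => hst⟩
  have hdisj : {L | IsGT n lam L}.PairwiseDisjoint
      fun L => {t | IsSVT n lam t ∧ gtOf n lam t = L} :=
    fun L _ L' _ hne => Set.disjoint_left.2 fun t ht ht' => hne (ht.2.symm.trans ht'.2)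
  rw [Groth, charSet, hunion, finsum_mem_biUnion hdisj (finite_setOf_isGT hlam) fun L hL => by
    rw [setOf_gtOf_eq_image hL hlam]
    exact (finite_toSet _).image _]
  refine finsum_mem_congr rfl fun L hL => ?_
  have hinj : Set.InjOn (tabOf n L) ↑(markable n L).powerset := fun M hM M' hM' h => by
    rw [← extras_tabOf (mem_powerset.1 hM), h, extras_tabOf (mem_powerset.1 hM')]
  rw [setOf_gtOf_eq_image hL hlam, finsum_mem_image hinj, finsum_mem_coe_finset,
    ← prod_markable_one_add hL, prod_one_add, mul_sum]
  exact sum_congr rfl fun M hM => betaP_pow_excess_mul_xwt_tabOf hL hlam (mem_powerset.1 hM)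

end SVTCrystal

end
end
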